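/- arXiv:2605.30091 — 10 statements merged into one kernel-verified Lean document; each statement's English description precedes it below -/
import Mathlib

section
/- Let X = {x_1,...,x_n} with f(x_1) ≤ ... ≤ f(x_n), let p ∈ Σ_X, δ ∈ [0,1], and let r be the smallest index in {1,...,n} such that δ ≥ ∑_{i=r+1}^n p(x_i). If r > 1, define q_TV by q_TV(x_1) = p(x_1)+δ, q_TV(x_i) = p(x_i) for 2 ≤ i ≤ r-1, q_TV(x_r) = ∑_{i=r}^n p(x_i) - δ, and q_TV(x_i) = 0 for i > r; if r = 1 let q_TV be the point mass at x_1. Then q_TV ∈ B_TV(p,δ) and E_{q_TV}(f) = min_{q ∈ B_TV(p,δ)} E_q(f). -/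
/-!
Moving from `p` to a point `q` of the total variation ball of radius `δ` shifts at most `δ` of
mass, so the distribution functions satisfy `F_q ≤ min 1 (F_p + δ)`. The candidate `q_TV` moves
exactly `δ` of mass from the top of the order to its bottom and attains this bound everywhere.
Hence every `q` in the ball stochastically dominates `q_TV`, and for monotone `f` stochastic
dominance orders expectations (summation by parts).
-/

open Finset

variable {ι : Type*}

/-- When `∑ d = 0` this is summation by parts, `0 ≤ ∑ d f`; the bound `c` is what makes the
induction on the largest element of `s` go through (it is instantiated at `c := f a`). -/
theorem Finset.sum_mul_le_sum_mul_of_prefix_sum_nonpos [LinearOrder ι] (s : Finset ι)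
    {d f : ι → ℝ} {c : ℝ} (hf : MonotoneOn f s) (hc : ∀ i ∈ s, f i ≤ c)
    (hd : ∀ t ∈ s, ∑ i ∈ s with i ≤ t, d i ≤ 0) :
    (∑ i ∈ s, d i) * c ≤ ∑ i ∈ s, d i * f i := by
  induction s using Finset.induction_on_max generalizing c with
  | empty => simp
  | insert a s hlt ih =>
    have ha : a ∉ s := fun h => lt_irrefl a (hlt a h)
    have hprefix : ∀ t ∈ s, {i ∈ insert a s | i ≤ t} = {i ∈ s | i ≤ t} := fun t ht => by
      rw [filter_insert, if_neg (not_le.2 (hlt t ht))]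
    have htotal : d a + ∑ i ∈ s, d i ≤ 0 := by
      have h := hd a (mem_insert_self a s)
      rwa [filter_true_of_mem fun i hi => ?_, sum_insert ha] at h
      rcases mem_insert.1 hi with rfl | hi
      exacts [le_rfl, (hlt i hi).le]
    have hs : (∑ i ∈ s, d i) * f a ≤ ∑ i ∈ s, d i * f i :=
      ih (hf.mono (subset_insert a s))
        (fun i hi => hf (mem_insert_of_mem hi) (mem_insert_self a s) (hlt i hi).le)
        (fun t ht => hprefix t ht ▸ hd t (mem_insert_of_mem ht))
    rw [sum_insert ha, sum_insert ha]
    calc (d a + ∑ i ∈ s, d i) * c ≤ (d a + ∑ i ∈ s, d i) * f a :=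
          mul_le_mul_of_nonpos_left (hc a (mem_insert_self a s)) htotal
      _ ≤ d a * f a + ∑ i ∈ s, d i * f i := by linarith

theorem sum_mul_le_sum_mul_of_sum_Iic_le [Fintype ι] [LinearOrder ι] [LocallyFiniteOrderBot ι]
    {q q' f : ι → ℝ} (hf : Monotone f) (hsum : ∑ i, q i = ∑ i, q' i)
    (hcdf : ∀ t, ∑ i ∈ Iic t, q' i ≤ ∑ i ∈ Iic t, q i) :
    ∑ i, q i * f i ≤ ∑ i, q' i * f i := by
  obtain ⟨c, hc⟩ := (Set.finite_range f).bddAbove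
  have h := univ.sum_mul_le_sum_mul_of_prefix_sum_nonpos (d := fun i => q' i - q i)
    (hf.monotoneOn _) (fun i _ => hc (Set.mem_range_self i)) fun t _ => by
      simpa [filter_ge_eq_Iic, sum_sub_distrib] using hcdf t
  simp only [sum_sub_distrib, sub_mul, hsum, sub_self, zero_mul] at h
  linarith

theorem two_mul_sum_sub_le_sum_abs_sub [Fintype ι] [DecidableEq ι] {p q : ι → ℝ}
    (h : ∑ i, q i = ∑ i, p i) (s : Finset ι) :
    2 * ∑ i ∈ s, (q i - p i) ≤ ∑ i, |q i - p i| := by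
  have hcompl : ∑ i ∈ sᶜ, -(q i - p i) = ∑ i ∈ s, (q i - p i) := by
    have htotal : ∑ i, (q i - p i) = 0 := by rw [sum_sub_distrib, h, sub_self]
    rw [← sum_add_sum_compl s] at htotal
    rw [sum_neg_distrib]
    linarith
  calc 2 * ∑ i ∈ s, (q i - p i) = ∑ i ∈ s, (q i - p i) + ∑ i ∈ sᶜ, -(q i - p i) := by
        rw [hcompl]; ring
    _ ≤ ∑ i ∈ s, |q i - p i| + ∑ i ∈ sᶜ, |q i - p i| :=
        add_le_add (sum_le_sum fun i _ => le_abs_self _) (sum_le_sum fun i _ => neg_le_abs _)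
    _ = ∑ i, |q i - p i| := sum_add_sum_compl s _

theorem sum_abs_sub_eq_two_mul_of_le_of_ne [Fintype ι] [DecidableEq ι] {p q : ι → ℝ} (a : ι)
    (h : ∑ i, q i = ∑ i, p i) (hle : ∀ i ≠ a, q i ≤ p i) :
    ∑ i, |q i - p i| = 2 * (q a - p a) := by
  have hrest : ∑ i ∈ univ.erase a, |q i - p i| = q a - p a := by
    have htotal : ∑ i, (q i - p i) = 0 := by rw [sum_sub_distrib, h, sub_self]
    have hsplit := add_sum_erase univ (fun i => q i - p i) (mem_univ a)
    rw [htotal] at hsplit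
    rw [sum_congr rfl fun i hi => abs_of_nonpos (sub_nonpos.2 (hle i (ne_of_mem_erase hi))),
      sum_neg_distrib]
    linarith
  have hpos : 0 ≤ q a - p a := hrest ▸ sum_nonneg fun i _ => abs_nonneg _
  rw [← add_sum_erase _ _ (mem_univ a), hrest, abs_of_nonneg hpos]
  ring

def tvBall [Fintype ι] (p : ι → ℝ) (δ : ℝ) : Set (ι → ℝ) :=
  {q | q ∈ stdSimplex ℝ ι ∧ 1 / 2 * ∑ i, |q i - p i| ≤ δ}

theorem sum_le_min_of_mem_tvBall [Fintype ι] [DecidableEq ι] {p q : ι → ℝ} {δ : ℝ}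
    (hp : ∑ i, p i = 1) (hq : q ∈ tvBall p δ) (s : Finset ι) :
    ∑ i ∈ s, q i ≤ min 1 (∑ i ∈ s, p i + δ) := by
  obtain ⟨⟨hq0, hq1⟩, htv⟩ := hq
  have h := two_mul_sum_sub_le_sum_abs_sub (hq1.trans hp.symm) s
  rw [sum_sub_distrib] at h
  refine le_min ?_ (by linarith)
  exact hq1 ▸ sum_le_sum_of_subset_of_nonneg (subset_univ s) fun i _ _ => hq0 i

theorem isLeast_sum_mul_tvBall_of_sum_Iic_ge [Fintype ι] [LinearOrder ι]
    [LocallyFiniteOrderBot ι] {p q₀ f : ι → ℝ} {δ : ℝ} (hf : Monotone f) (hp : ∑ i, p i = 1)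
    (hq₀ : q₀ ∈ tvBall p δ) (hcdf : ∀ t, min 1 (∑ i ∈ Iic t, p i + δ) ≤ ∑ i ∈ Iic t, q₀ i) :
    IsLeast ((fun q => ∑ i, q i * f i) '' tvBall p δ) (∑ i, q₀ i * f i) := by
  refine ⟨⟨q₀, hq₀, rfl⟩, ?_⟩
  rintro _ ⟨q, hq, rfl⟩
  exact sum_mul_le_sum_mul_of_sum_Iic_le hf (hq₀.1.2.trans hq.1.2.symm) fun t =>
    (sum_le_min_of_mem_tvBall hp hq (Iic t)).trans (hcdf t)

theorem Finset.sum_Iic_add_sum_Ioi [Fintype ι] [LinearOrder ι] [LocallyFiniteOrderBot ι]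
    [LocallyFiniteOrderTop ι] (g : ι → ℝ) (t : ι) :
    ∑ i ∈ Iic t, g i + ∑ i ∈ Ioi t, g i = ∑ i, g i := by
  rw [← sum_add_sum_compl (Iic t)]
  congr 2
  ext i
  simp

section Minimizers

variable [LinearOrder ι] [LocallyFiniteOrderTop ι] {p f : ι → ℝ} {δ : ℝ} {a r : ι}

/-- The paper's `q_TV` when `r > 1`, with `a` the least element. -/
def tvMinimizer (p : ι → ℝ) (δ : ℝ) (a r : ι) : ι → ℝ := fun i =>
  if i = a then p i + δ else if i < r then p i else if i = r then ∑ j ∈ Ici r, p j - δ else 0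

theorem tvMinimizer_of_lt {i : ι} (hi : i < r) :
    tvMinimizer p δ a r i = p i + if i = a then δ else 0 := by
  by_cases h : i = a <;> simp [tvMinimizer, h, hi]

theorem tvMinimizer_self (har : a < r) : tvMinimizer p δ a r r = ∑ j ∈ Ici r, p j - δ := by
  simp [tvMinimizer, har.ne']

theorem tvMinimizer_of_gt (ha : IsBot a) {i : ι} (hi : r < i) : tvMinimizer p δ a r i = 0 := by
  simp [tvMinimizer, ((ha r).trans_lt hi).ne', hi.not_gt, hi.ne']

theorem sum_tvMinimizer_of_forall_lt {s : Finset ι} (has : a ∈ s) (hs : ∀ i ∈ s, i < r) :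
    ∑ i ∈ s, tvMinimizer p δ a r i = ∑ i ∈ s, p i + δ := by
  rw [sum_congr rfl fun i hi => tvMinimizer_of_lt (hs i hi), sum_add_distrib, sum_ite_eq' s a,
    if_pos has]

theorem tvMinimizer_le_of_ne (ha : IsBot a) (har : a < r) (hp0 : ∀ i, 0 ≤ p i)
    (hr : ∑ i ∈ Ioi r, p i ≤ δ) {i : ι} (hia : i ≠ a) : tvMinimizer p δ a r i ≤ p i := by
  rcases lt_trichotomy i r with hi | rfl | hi
  · rw [tvMinimizer_of_lt hi, if_neg hia, add_zero]
  · rw [tvMinimizer_self har, ← add_sum_Ioi_eq_sum_Ici]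
    linarith
  · rw [tvMinimizer_of_gt ha hi]
    exact hp0 i

variable [Fintype ι]

theorem sum_Ioi_eq_one_sub_of_isBot (ha : IsBot a) (hp : ∑ i, p i = 1) :
    ∑ i ∈ Ioi a, p i = 1 - p a := by
  have hIci : Ici a = univ := eq_univ_of_forall fun i => mem_Ici.2 (ha i)
  rw [← hp, ← hIci, ← add_sum_Ioi_eq_sum_Ici]
  ring

theorem ite_bot_mem_tvBall (ha : IsBot a) (hp0 : ∀ i, 0 ≤ p i) (hp1 : ∑ i, p i = 1)
    (hδ : ∑ i ∈ Ioi a, p i ≤ δ) :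
    (fun i => if i = a then 1 else 0) ∈ tvBall p δ := by
  refine ⟨⟨fun i => by by_cases h : i = a <;> simp [h], by simp⟩, ?_⟩
  rw [sum_abs_sub_eq_two_mul_of_le_of_ne a (by simp [hp1]) fun i hi => by simp [hi, hp0 i]]
  rw [sum_Ioi_eq_one_sub_of_isBot ha hp1] at hδ
  norm_num
  linarith

theorem tvMinimizer_nonneg (ha : IsBot a) (har : a < r) (hp0 : ∀ i, 0 ≤ p i) (hδ0 : 0 ≤ δ)
    (hrmin : ∀ s < r, δ < ∑ i ∈ Ioi s, p i) (i : ι) : 0 ≤ tvMinimizer p δ a r i := by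
  rcases lt_trichotomy i r with hi | rfl | hi
  · rw [tvMinimizer_of_lt hi]
    have := hp0 i
    split_ifs <;> linarith
  · obtain ⟨s, -, hs⟩ := exists_le_covBy_of_lt har
    have hIoi : Ioi s = Ici i := coe_injective (by simpa using hs.Ioi_eq)
    rw [tvMinimizer_self har, sub_nonneg, ← hIoi]
    exact (hrmin s hs.lt).le
  · rw [tvMinimizer_of_gt ha hi]

variable [LocallyFiniteOrderBot ι]

theorem isLeast_ite_bot (hf : Monotone f) (ha : IsBot a) (hp0 : ∀ i, 0 ≤ p i)
    (hp1 : ∑ i, p i = 1) (hδ : ∑ i ∈ Ioi a, p i ≤ δ) :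
    (fun i => if i = a then 1 else 0) ∈ tvBall p δ ∧
      IsLeast ((fun q => ∑ i, q i * f i) '' tvBall p δ)
        (∑ i, (if i = a then 1 else 0) * f i) := by
  have hmem := ite_bot_mem_tvBall ha hp0 hp1 hδ
  refine ⟨hmem, isLeast_sum_mul_tvBall_of_sum_Iic_ge hf hp1 hmem fun t => ?_⟩
  rw [sum_ite_eq' (Iic t) a, if_pos (mem_Iic.2 (ha t))]
  exact min_le_left _ _

theorem sum_tvMinimizer (ha : IsBot a) (har : a < r) :
    ∑ i, tvMinimizer p δ a r i = ∑ i, p i := by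
  have hbelow := sum_tvMinimizer_of_forall_lt (p := p) (δ := δ) (mem_Iio.2 har)
    fun i hi => mem_Iio.1 hi
  have habove : ∑ i ∈ Ioi r, tvMinimizer p δ a r i = 0 :=
    sum_eq_zero fun i hi => tvMinimizer_of_gt ha (mem_Ioi.1 hi)
  rw [← sum_Iic_add_sum_Ioi _ r, ← sum_Iic_add_sum_Ioi _ r, ← sum_Iio_add_eq_sum_Iic,
    ← sum_Iio_add_eq_sum_Iic, hbelow, habove, tvMinimizer_self har, ← add_sum_Ioi_eq_sum_Ici]
  ring

theorem sum_Iic_tvMinimizer_of_le (ha : IsBot a) (har : a < r) {t : ι} (ht : r ≤ t) :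
    ∑ i ∈ Iic t, tvMinimizer p δ a r i = ∑ i, p i := by
  have habove : ∑ i ∈ Ioi t, tvMinimizer p δ a r i = 0 :=
    sum_eq_zero fun i hi => tvMinimizer_of_gt ha (ht.trans_lt (mem_Ioi.1 hi))
  rw [← sum_tvMinimizer ha har, ← sum_Iic_add_sum_Ioi _ t, habove, add_zero]

theorem tvMinimizer_mem_tvBall (ha : IsBot a) (har : a < r) (hp0 : ∀ i, 0 ≤ p i)
    (hp1 : ∑ i, p i = 1) (hδ0 : 0 ≤ δ) (hr : ∑ i ∈ Ioi r, p i ≤ δ)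
    (hrmin : ∀ s < r, δ < ∑ i ∈ Ioi s, p i) : tvMinimizer p δ a r ∈ tvBall p δ := by
  refine ⟨⟨tvMinimizer_nonneg ha har hp0 hδ0 hrmin, (sum_tvMinimizer ha har).trans hp1⟩, ?_⟩
  rw [sum_abs_sub_eq_two_mul_of_le_of_ne a (sum_tvMinimizer ha har)
    fun i hia => tvMinimizer_le_of_ne ha har hp0 hr hia, tvMinimizer_of_lt har, if_pos rfl]
  linarith

theorem isLeast_tvMinimizer (hf : Monotone f) (ha : IsBot a) (har : a < r)
    (hp0 : ∀ i, 0 ≤ p i) (hp1 : ∑ i, p i = 1) (hδ0 : 0 ≤ δ) (hr : ∑ i ∈ Ioi r, p i ≤ δ)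
    (hrmin : ∀ s < r, δ < ∑ i ∈ Ioi s, p i) :
    tvMinimizer p δ a r ∈ tvBall p δ ∧
      IsLeast ((fun q => ∑ i, q i * f i) '' tvBall p δ) (∑ i, tvMinimizer p δ a r i * f i) := by
  have hmem := tvMinimizer_mem_tvBall ha har hp0 hp1 hδ0 hr hrmin
  refine ⟨hmem, isLeast_sum_mul_tvBall_of_sum_Iic_ge hf hp1 hmem fun t => ?_⟩
  rcases lt_or_ge t r with ht | ht
  · rw [sum_tvMinimizer_of_forall_lt (mem_Iic.2 (ha t)) fun i hi => (mem_Iic.1 hi).trans_lt ht]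
    exact min_le_right _ _
  · rw [sum_Iic_tvMinimizer_of_le ha har ht, hp1]
    exact min_le_left _ _

end Minimizers

theorem tv_lower_expectation_general
    (n : ℕ) (hn : 0 < n) (f p : Fin n → ℝ) (hf : Monotone f)
    (hp0 : ∀ i, 0 ≤ p i) (hp1 : ∑ i, p i = 1)
    (δ : ℝ) (hδ0 : 0 ≤ δ)
    (r : Fin n)
    (hr : ∑ i ∈ Finset.Ioi r, p i ≤ δ)
    (hrmin : ∀ s : Fin n, s < r → δ < ∑ i ∈ Finset.Ioi s, p i)
    (qTV : Fin n → ℝ)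
    (hqTV : if r = (⟨0, hn⟩ : Fin n) then
        qTV = fun i => if i = (⟨0, hn⟩ : Fin n) then (1 : ℝ) else 0
      else
        qTV = fun i =>
          if i = (⟨0, hn⟩ : Fin n) then p i + δ
          else if i < r then p i
          else if i = r then (∑ j ∈ Finset.Ici r, p j) - δ
          else 0) :
    let B : Set (Fin n → ℝ) :=
      {q | ((∀ i, 0 ≤ q i) ∧ ∑ i, q i = 1) ∧ (1 / 2) * ∑ i, |q i - p i| ≤ δ}
    qTV ∈ B ∧
      IsLeast ((fun q : Fin n → ℝ => ∑ i, q i * f i) '' B) (∑ i, qTV i * f i) := by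
  have hbot : IsBot (⟨0, hn⟩ : Fin n) := fun i => Nat.zero_le i.val
  split_ifs at hqTV with hr0 <;> subst hqTV
  · exact isLeast_ite_bot hf hbot hp0 hp1 (hr0 ▸ hr)
  · exact isLeast_tvMinimizer hf hbot (lt_of_le_of_ne (hbot r) (Ne.symm hr0)) hp0 hp1 hδ0 hr hrmin

/-- Closed form minimizer for the lower expectation over a total variation ball. -/
theorem tv_lower_expectation
    (n : ℕ) (hn : 0 < n) (f p : Fin n → ℝ) (hf : Monotone f)
    (hp0 : ∀ i, 0 ≤ p i) (hp1 : ∑ i, p i = 1)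
    (δ : ℝ) (hδ0 : 0 ≤ δ) (hδ1 : δ ≤ 1)
    (r : Fin n)
    (hr : ∑ i ∈ Finset.Ioi r, p i ≤ δ)
    (hrmin : ∀ s : Fin n, s < r → δ < ∑ i ∈ Finset.Ioi s, p i)
    (qTV : Fin n → ℝ)
    (hqTV : if r = (⟨0, hn⟩ : Fin n) then
        qTV = fun i => if i = (⟨0, hn⟩ : Fin n) then (1 : ℝ) else 0
      else
        qTV = fun i =>
          if i = (⟨0, hn⟩ : Fin n) then p i + δ
          else if i < r then p i
          else if i = r then (∑ j ∈ Finset.Ici r, p j) - δ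
          else 0) :
    let B : Set (Fin n → ℝ) :=
      {q | ((∀ i, 0 ≤ q i) ∧ ∑ i, q i = 1) ∧ (1 / 2) * ∑ i, |q i - p i| ≤ δ}
    qTV ∈ B ∧
      IsLeast ((fun q : Fin n → ℝ => ∑ i, q i * f i) '' B) (∑ i, qTV i * f i) :=
  tv_lower_expectation_general n hn f p hf hp0 hp1 δ hδ0 r hr hrmin qTV hqTV
end

section
/- With the notation of the TV theorem and r > 1, the function q_TV (given by q_TV(x_1)=p(x_1)+δ, q_TV(x_i)=p(x_i) for 2≤i≤r-1, q_TV(x_r)=∑_{i=r}^n p(x_i)-δ, q_TV(x_i)=0 for i>r) is a probability mass function satisfying d_TV(q_TV,p) = δ. -/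
/-!
`q_TV` moves mass `δ` onto the bottom point `a` and takes it from the tail `{i ≥ r}`, which it
collapses onto `r`. So `q_TV - p` vanishes below `r` except at `a`, where it is `δ`; at `r` it is
`∑_{i > r} p i - δ ≤ 0`, and above `r` it is `-p i`. Both the total mass and the `ℓ¹` distance
are then sums of three terms: `δ + (∑_{i > r} p i - δ) - ∑_{i > r} p i = 0` and
`δ + (δ - ∑_{i > r} p i) + ∑_{i > r} p i = 2δ`.
-/

open Finset

section

variable {α : Type*} [LinearOrder α] [LocallyFiniteOrderTop α]

theorem Finset.sum_eq_add_add_sum_Ioi_of_eq_zero [Fintype α] {M : Type*} [AddCommMonoid M]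
    {f : α → M} {a r : α} (har : a < r) (hf : ∀ i < r, i ≠ a → f i = 0) :
    ∑ i, f i = f a + (f r + ∑ i ∈ Ioi r, f i) := by
  have hr : r ∉ Ioi r := notMem_Ioi_self
  have ha : a ∉ insert r (Ioi r) := by
    simpa only [mem_insert, mem_Ioi, not_or] using ⟨har.ne, har.not_gt⟩
  rw [← sum_insert hr, ← sum_insert ha]
  refine (sum_subset (subset_univ _) fun i _ hi => ?_).symm
  simp only [mem_insert, mem_Ioi, not_or, not_lt] at hi
  exact hf i (hi.2.2.lt_of_ne hi.2.1) hi.1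

def moveTailMass (p : α → ℝ) (a r : α) (δ : ℝ) (i : α) : ℝ :=
  if i = a then p i + δ
  else if i < r then p i
  else if i = r then (∑ j ∈ Ici r, p j) - δ
  else 0

variable {p : α → ℝ} {a r i : α} {δ : ℝ}

theorem moveTailMass_apply_left : moveTailMass p a r δ a = p a + δ := if_pos rfl

theorem moveTailMass_apply_of_lt (hir : i < r) (hia : i ≠ a) : moveTailMass p a r δ i = p i := by
  simp [moveTailMass, hir, hia]

theorem moveTailMass_apply_right (har : a < r) :
    moveTailMass p a r δ r = p r + ∑ j ∈ Ioi r, p j - δ := by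
  rw [moveTailMass, if_neg har.ne', if_neg (lt_irrefl r), if_pos rfl, Ici_eq_cons_Ioi, sum_cons]

theorem moveTailMass_apply_of_gt (har : a < r) (hri : r < i) : moveTailMass p a r δ i = 0 := by
  simp [moveTailMass, (har.trans hri).ne', hri.not_gt, hri.ne']

theorem moveTailMass_nonneg (hp : ∀ i, 0 ≤ p i) (hδ : 0 ≤ δ) (hδr : δ ≤ ∑ j ∈ Ici r, p j) :
    0 ≤ moveTailMass p a r δ i := by
  unfold moveTailMass
  split_ifs
  exacts [add_nonneg (hp i) hδ, hp i, sub_nonneg.2 hδr, le_rfl]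

variable [Fintype α]

theorem sum_moveTailMass_sub (har : a < r) : ∑ i, (moveTailMass p a r δ i - p i) = 0 := by
  have htail : ∑ i ∈ Ioi r, (moveTailMass p a r δ i - p i) = -∑ i ∈ Ioi r, p i := by
    rw [← sum_neg_distrib]
    exact sum_congr rfl fun i hi => by rw [moveTailMass_apply_of_gt har (mem_Ioi.1 hi), zero_sub]
  rw [sum_eq_add_add_sum_Ioi_of_eq_zero har fun i hir hia => by
      rw [moveTailMass_apply_of_lt hir hia, sub_self],
    moveTailMass_apply_left, moveTailMass_apply_right har, htail]
  ring

theorem sum_moveTailMass (har : a < r) : ∑ i, moveTailMass p a r δ i = ∑ i, p i := by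
  simpa [sub_eq_zero] using sum_moveTailMass_sub (p := p) (δ := δ) har

theorem sum_abs_moveTailMass_sub (har : a < r) (hp : ∀ i, 0 ≤ p i) (hδ : 0 ≤ δ)
    (hδr : ∑ j ∈ Ioi r, p j ≤ δ) : ∑ i, |moveTailMass p a r δ i - p i| = 2 * δ := by
  have htail : ∑ i ∈ Ioi r, |moveTailMass p a r δ i - p i| = ∑ i ∈ Ioi r, p i :=
    sum_congr rfl fun i hi => by
      rw [moveTailMass_apply_of_gt har (mem_Ioi.1 hi), zero_sub, abs_neg, abs_of_nonneg (hp i)]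
  rw [sum_eq_add_add_sum_Ioi_of_eq_zero har fun i hir hia => by
      rw [moveTailMass_apply_of_lt hir hia, sub_self, abs_zero],
    moveTailMass_apply_left, moveTailMass_apply_right har, htail, add_sub_cancel_left,
    abs_of_nonneg hδ, add_sub_assoc, add_sub_cancel_left, abs_of_nonpos (sub_nonpos.2 hδr)]
  ring

end

theorem qTV_is_pmf_with_tv_eq_delta_general
    (n : ℕ) (hn : 0 < n) (p : Fin n → ℝ)
    (hp0 : ∀ i, 0 ≤ p i) (hp1 : ∑ i, p i = 1)
    (δ : ℝ) (hδ0 : 0 ≤ δ)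
    (r : Fin n) (hr1 : (⟨0, hn⟩ : Fin n) < r)
    (hr : ∑ i ∈ Finset.Ioi r, p i ≤ δ)
    (hr' : δ < ∑ i ∈ Finset.Ici r, p i)
    (qTV : Fin n → ℝ)
    (hqTV : qTV = fun i =>
      if i = (⟨0, hn⟩ : Fin n) then p i + δ
      else if i < r then p i
      else if i = r then (∑ j ∈ Finset.Ici r, p j) - δ
      else 0) :
    (∀ i, 0 ≤ qTV i) ∧ ∑ i, qTV i = 1 ∧
      (1 / 2) * ∑ i, |qTV i - p i| = δ := by
  obtain rfl : qTV = moveTailMass p ⟨0, hn⟩ r δ := hqTV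
  refine ⟨fun i => moveTailMass_nonneg hp0 hδ0 hr'.le, ?_, ?_⟩
  · rw [sum_moveTailMass hr1, hp1]
  · rw [sum_abs_moveTailMass_sub hr1 hp0 hδ0 hr]
    ring

/-- For `r > 1`, the candidate `q_TV` is a probability mass function whose total
variation distance to `p` is exactly `δ`. -/
theorem qTV_is_pmf_with_tv_eq_delta
    (n : ℕ) (hn : 0 < n) (p : Fin n → ℝ)
    (hp0 : ∀ i, 0 ≤ p i) (hp1 : ∑ i, p i = 1)
    (δ : ℝ) (hδ0 : 0 ≤ δ) (hδ1 : δ ≤ 1)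
    (r : Fin n) (hr1 : (⟨0, hn⟩ : Fin n) < r)
    (hr : ∑ i ∈ Finset.Ioi r, p i ≤ δ)
    (hr' : δ < ∑ i ∈ Finset.Ici r, p i)
    (qTV : Fin n → ℝ)
    (hqTV : qTV = fun i =>
      if i = (⟨0, hn⟩ : Fin n) then p i + δ
      else if i < r then p i
      else if i = r then (∑ j ∈ Finset.Ici r, p j) - δ
      else 0) :
    (∀ i, 0 ≤ qTV i) ∧ ∑ i, qTV i = 1 ∧
      (1 / 2) * ∑ i, |qTV i - p i| = δ :=
  qTV_is_pmf_with_tv_eq_delta_general n hn p hp0 hp1 δ hδ0 r hr1 hr hr' qTV hqTV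
end

section
/- Let q: X → ℝ satisfy ∑_{i=1}^k q(x_i) = 1 and q(x_i) = 0 for i > k, let m_k = ∑_{i=1}^k p(x_i), and define u(x_i) = q(x_i)/p(x_i) - 1/m_k on {x_1,...,x_k}. Then the χ²-divergence decomposes as d_{χ²}(q,p) = m_k · E_k(u²) + (1-m_k)/m_k, where E_k denotes expectation with respect to the normalized restriction p_k(x_i) = p(x_i)/m_k. -/
open Finset

/-!
Both sides equal `∑_{i ≤ k} q(x_i)²/p(x_i) - 1`: expanding the squares, the χ²-divergence of two
probability vectors is `∑ q²/p - 1`, while `m_k E_k(u²) = ∑_{i ≤ k} p (q/p - 1/m_k)²` expands to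
`∑_{i ≤ k} q²/p - 1/m_k`, and `(1 - m_k)/m_k = 1/m_k - 1`.
-/

theorem Finset.sum_mul_div_sub_sq {ι : Type*} (s : Finset ι) (p q : ι → ℝ) (c : ℝ)
    (hp : ∀ i ∈ s, p i ≠ 0) :
    ∑ i ∈ s, p i * (q i / p i - c) ^ 2 =
      ∑ i ∈ s, q i ^ 2 / p i - 2 * c * ∑ i ∈ s, q i + c ^ 2 * ∑ i ∈ s, p i := by
  have hterm : ∀ i ∈ s, p i * (q i / p i - c) ^ 2 = q i ^ 2 / p i - 2 * c * q i + c ^ 2 * p i := by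
    intro i hi
    field_simp [hp i hi]
    ring
  rw [sum_congr rfl hterm, sum_add_distrib, sum_sub_distrib, mul_sum, mul_sum]

theorem sum_sq_sub_div_eq_sum_sq_div_sub_one {ι : Type*} [Fintype ι] (p q : ι → ℝ)
    (hp : ∀ i, p i ≠ 0) (hp1 : ∑ i, p i = 1) (hq1 : ∑ i, q i = 1) :
    ∑ i, (q i - p i) ^ 2 / p i = ∑ i, q i ^ 2 / p i - 1 := by
  have hterm : ∀ i ∈ univ, (q i - p i) ^ 2 / p i = p i * (q i / p i - 1) ^ 2 := by
    intro i _
    field_simp [hp i]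
  rw [sum_congr rfl hterm, sum_mul_div_sub_sq _ p q 1 (fun i _ => hp i), hp1, hq1]
  ring

/-- Decomposition of the χ²-divergence: for `q` supported on `{x_1,...,x_k}` with
total mass 1, `d_{χ²}(q,p) = m_k · E_k(u²) + (1-m_k)/m_k`. -/
theorem chi2_divergence_decomposition
    (n : ℕ) (p : Fin n → ℝ)
    (hp0 : ∀ i, 0 < p i) (hp1 : ∑ i, p i = 1)
    (k : Fin n) (q : Fin n → ℝ)
    (hq1 : ∑ i ∈ Finset.Iic k, q i = 1)
    (hq0 : ∀ i, k < i → q i = 0) :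
    let m : ℝ := ∑ i ∈ Finset.Iic k, p i
    let u : Fin n → ℝ := fun i => q i / p i - 1 / m
    ∑ i, (q i - p i) ^ 2 / p i =
      m * (∑ i ∈ Finset.Iic k, (p i / m) * (u i) ^ 2) + (1 - m) / m := by
  intro m u
  have hp : ∀ i, p i ≠ 0 := fun i => (hp0 i).ne'
  have hm : m ≠ 0 := (sum_pos (fun i _ => hp0 i) ⟨k, mem_Iic.mpr le_rfl⟩).ne'
  have hvanish : ∀ i ∉ Iic k, q i = 0 := fun i hi => hq0 i (by simpa using hi)
  have hq1' : ∑ i, q i = 1 := by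
    rw [← hq1, sum_subset (subset_univ _) (fun i _ hi => hvanish i hi)]
  have hsupp : ∑ i, q i ^ 2 / p i = ∑ i ∈ Iic k, q i ^ 2 / p i :=
    (sum_subset (subset_univ _) (fun i _ hi => by simp [hvanish i hi])).symm
  have hweights : m * ∑ i ∈ Iic k, p i / m * u i ^ 2 = ∑ i ∈ Iic k, p i * u i ^ 2 := by
    rw [mul_sum]
    exact sum_congr rfl fun i _ => by field_simp
  rw [sum_sq_sub_div_eq_sum_sq_div_sub_one p q hp hp1 hq1', hsupp, hweights,
    sum_mul_div_sub_sq _ p q _ (fun i _ => hp i), hq1]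
  field_simp
  ring
end

section
/- For k > ℓ, the set Q_k = {q : X → ℝ : ∑ q(x_i) = 1, d_{χ²}(q,p) ≤ δ, q(x_i) = 0 for i > k} is nonempty if and only if m_k·δ - (1 - m_k) ≥ 0, equivalently δ ≥ (1-m_k)/m_k. -/
/-!
A distribution `q` supported on `S` pays exactly `p(Sᶜ) = 1 - m` on `Sᶜ`, where it vanishes,
and by Sedrakyan's form of Cauchy–Schwarz at least `(∑_S (q - p))² / m = (1 - m)² / m` on `S`,
with equality for the conditioned distribution `q = p / m` on `S`. Hence the least
`χ²`-divergence from `p` of a distribution supported on `S` is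
`(1 - m)²/m + (1 - m) = (1 - m)/m`.
-/

open Finset

namespace ChiSq

variable {ι : Type*} {p q : ι → ℝ} {S : Finset ι}

noncomputable def chiSqDist [Fintype ι] (q p : ι → ℝ) : ℝ := ∑ i, (q i - p i) ^ 2 / p i

noncomputable def condOn (p : ι → ℝ) (S : Finset ι) : ι → ℝ :=
  (S : Set ι).indicator fun i => p i / ∑ j ∈ S, p j

lemma chiSqDist_eq_of_eq_zero_off [Fintype ι] (hp : ∀ i ∉ S, p i ≠ 0) (hp1 : ∑ i, p i = 1)
    (hq : ∀ i ∉ S, q i = 0) :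
    chiSqDist q p = ∑ i ∈ S, (q i - p i) ^ 2 / p i + (1 - ∑ i ∈ S, p i) := by
  classical
  have hcompl : ∑ i ∈ Sᶜ, (q i - p i) ^ 2 / p i = ∑ i ∈ Sᶜ, p i := by
    refine sum_congr rfl fun i hi => ?_
    have hiS : i ∉ S := mem_compl.1 hi
    rw [hq i hiS, zero_sub, neg_sq, sq, mul_div_cancel_right₀ _ (hp i hiS)]
  rw [chiSqDist, ← sum_add_sum_compl S, hcompl, ← hp1, ← sum_add_sum_compl S p]
  ring

lemma sq_one_sub_div_le_sum (hp : ∀ i ∈ S, 0 < p i) (hq1 : ∑ i ∈ S, q i = 1) :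
    (1 - ∑ i ∈ S, p i) ^ 2 / ∑ i ∈ S, p i ≤ ∑ i ∈ S, (q i - p i) ^ 2 / p i := by
  simpa only [sum_sub_distrib, hq1] using sq_sum_div_le_sum_sq_div S (fun i => q i - p i) hp

lemma sum_condOn_sub_sq_div (hp : ∀ i ∈ S, p i ≠ 0) (hm : ∑ i ∈ S, p i ≠ 0) :
    ∑ i ∈ S, (condOn p S i - p i) ^ 2 / p i =
      (1 - ∑ i ∈ S, p i) ^ 2 / ∑ i ∈ S, p i := by
  set m := ∑ i ∈ S, p i
  have hterm : ∀ i ∈ S, (condOn p S i - p i) ^ 2 / p i = p i * ((1 - m) / m) ^ 2 := by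
    intro i hi
    have hpi := hp i hi
    rw [condOn, Set.indicator_of_mem (mem_coe.2 hi)]
    change (p i / m - p i) ^ 2 / p i = _
    field_simp
  rw [sum_congr rfl hterm, ← sum_mul]
  field_simp
  ring

lemma sum_condOn [Fintype ι] (hm : ∑ i ∈ S, p i ≠ 0) : ∑ i, condOn p S i = 1 := by
  rw [condOn, sum_indicator_subset _ (subset_univ S), ← sum_div, div_self hm]

lemma condOn_eq_zero_of_notMem {i : ι} (hi : i ∉ S) : condOn p S i = 0 := by
  rw [condOn, Set.indicator_of_notMem (mt mem_coe.1 hi)]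

lemma sq_one_sub_div_add_one_sub {m : ℝ} (hm : m ≠ 0) :
    (1 - m) ^ 2 / m + (1 - m) = (1 - m) / m := by
  field_simp
  ring

theorem exists_chiSqDist_le_iff [Fintype ι] (hp : ∀ i, 0 < p i) (hp1 : ∑ i, p i = 1)
    (hS : S.Nonempty) (δ : ℝ) :
    (∃ q, ∑ i, q i = 1 ∧ chiSqDist q p ≤ δ ∧ ∀ i ∉ S, q i = 0) ↔
      (1 - ∑ i ∈ S, p i) / ∑ i ∈ S, p i ≤ δ := by
  have hm : ∑ i ∈ S, p i ≠ 0 := (sum_pos (fun i _ => hp i) hS).ne'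
  have hp' : ∀ i, p i ≠ 0 := fun i => (hp i).ne'
  constructor
  · rintro ⟨q, hq1, hqδ, hq⟩
    have hqS : ∑ i ∈ S, q i = 1 := by
      rwa [sum_subset (subset_univ S) fun i _ hi => hq i hi]
    rw [chiSqDist_eq_of_eq_zero_off (fun i _ => hp' i) hp1 hq] at hqδ
    rw [← sq_one_sub_div_add_one_sub hm]
    linarith [sq_one_sub_div_le_sum (fun i _ => hp i) hqS]
  · intro h
    have hsupp : ∀ i ∉ S, condOn p S i = 0 := fun i hi => condOn_eq_zero_of_notMem hi
    refine ⟨condOn p S, sum_condOn hm, ?_, hsupp⟩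
    rwa [chiSqDist_eq_of_eq_zero_off (fun i _ => hp' i) hp1 hsupp,
      sum_condOn_sub_sq_div (fun i _ => hp' i) hm, sq_one_sub_div_add_one_sub hm]

end ChiSq

open ChiSq in
theorem chi2_Qk_nonempty_iff_general
    (n : ℕ) (p : Fin n → ℝ)
    (hp0 : ∀ i, 0 < p i) (hp1 : ∑ i, p i = 1)
    (δ : ℝ)
    (k : Fin n) :
    let m : ℝ := ∑ i ∈ Finset.Iic k, p i
    let Qk : Set (Fin n → ℝ) :=
      {q | ∑ i, q i = 1 ∧ ∑ i, (q i - p i) ^ 2 / p i ≤ δ ∧ ∀ i, k < i → q i = 0}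
    (Qk.Nonempty ↔ 0 ≤ m * δ - (1 - m)) ∧
      (0 ≤ m * δ - (1 - m) ↔ (1 - m) / m ≤ δ) := by
  intro m Qk
  have hm : 0 < m := sum_pos (fun i _ => hp0 i) nonempty_Iic
  have hthreshold : 0 ≤ m * δ - (1 - m) ↔ (1 - m) / m ≤ δ := by
    rw [div_le_iff₀ hm]
    constructor <;> intro h <;> linarith
  refine ⟨?_, hthreshold⟩
  rw [hthreshold, ← exists_chiSqDist_le_iff hp0 hp1 nonempty_Iic δ]
  simp only [Qk, Set.Nonempty, Set.mem_ofPred_eq, chiSqDist, mem_Iic, not_le]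

/-- For `k > ℓ`, the set `Q_k` is nonempty iff `m_k·δ - (1 - m_k) ≥ 0`, iff
`δ ≥ (1 - m_k)/m_k`. -/
theorem chi2_Qk_nonempty_iff
    (n : ℕ) (hn : 0 < n) (f p : Fin n → ℝ) (hf : Monotone f)
    (hp0 : ∀ i, 0 < p i) (hp1 : ∑ i, p i = 1)
    (δ : ℝ) (hδ : 0 ≤ δ)
    (ℓ : Fin n) (hℓ : f ℓ = f ⟨0, hn⟩)
    (hℓmax : ∀ i, f i = f ⟨0, hn⟩ → i ≤ ℓ)
    (k : Fin n) (hk : ℓ < k) :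
    let m : ℝ := ∑ i ∈ Finset.Iic k, p i
    let Qk : Set (Fin n → ℝ) :=
      {q | ∑ i, q i = 1 ∧ ∑ i, (q i - p i) ^ 2 / p i ≤ δ ∧ ∀ i, k < i → q i = 0}
    (Qk.Nonempty ↔ 0 ≤ m * δ - (1 - m)) ∧
      (0 ≤ m * δ - (1 - m) ↔ (1 - m) / m ≤ δ) :=
  chi2_Qk_nonempty_iff_general n p hp0 hp1 δ k
end

section
/- For k > ℓ with δ ≥ (1-m_k)/m_k, the minimum of E_q(f) over Q_k equals μ_k - σ_k·√(m_k·δ - (1-m_k)), and is attained uniquely by q_k defined by q_k(x_i) = (p(x_i)/m_k)·(1 - ((f(x_i)-μ_k)/σ_k)·√(m_k·δ - (1-m_k))) for i ≤ k and q_k(x_i) = 0 for i > k. -/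
/-!
On the support `S = {x_1, …, x_k}`, the minimiser is the linear tilt `q₀ = p · (1/m - c (f - μ))`
of `p`, with `c = t / (m σ)`, `σ = √σ2` and `t = √(m δ - (1 - m))`. Completing the square in the
`ℓ²`-geometry with weights `1/p` gives, for every `q` of mass one supported on `S`,
`∑_S (q - q₀)² / p = (χ²(q, p) - δ) + 2c (E_q f - (μ - σ t))`.
Hence `χ²(q, p) ≤ δ` forces `E_q f ≥ μ - σ t`, with equality only for `q = q₀`, while `q₀` has
mass one, `χ²(q₀, p) = δ` and `E_{q₀} f = μ - σ t`.
-/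

open Finset

theorem isLeast_image_and_eq_of_le_mul_sub {α : Type*} {Q : Set α} {E D : α → ℝ} {q₀ : α}
    {v c : ℝ} (hc : 0 ≤ c) (hq₀ : q₀ ∈ Q) (hEq₀ : E q₀ = v)
    (hD : ∀ q ∈ Q, D q ≤ c * (E q - v)) (hD0 : ∀ q ∈ Q, D q ≤ 0 → q = q₀) :
    IsLeast (E '' Q) v ∧ ∀ q ∈ Q, E q = v → q = q₀ := by
  have hEq : ∀ q ∈ Q, E q ≤ v → q = q₀ := fun q hq hle =>
    hD0 q hq ((hD q hq).trans (mul_nonpos_of_nonneg_of_nonpos hc (sub_nonpos.2 hle)))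
  refine ⟨⟨⟨q₀, hq₀, hEq₀⟩, ?_⟩, fun q hq h => hEq q hq h.le⟩
  rintro _ ⟨q, hq, rfl⟩
  by_contra! hlt
  exact hlt.ne (hEq q hq hlt.le ▸ hEq₀)

section WeightedSums

variable {α : Type*} {s : Finset α} {p f q r : α → ℝ} {m μ c : ℝ}

theorem sum_mul_sub_eq_zero_of_mean (hm : ∑ i ∈ s, p i = m) (hμ : ∑ i ∈ s, p i * f i = m * μ) :
    ∑ i ∈ s, p i * (f i - μ) = 0 := by
  simp only [mul_sub, sum_sub_distrib, ← sum_mul, hm, hμ, sub_self]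

theorem sum_mul_sq_sub_pos_of_ne {i j : α} (hp : ∀ i ∈ s, 0 < p i) (hi : i ∈ s) (hj : j ∈ s)
    (hij : f i ≠ f j) (μ : ℝ) : 0 < ∑ k ∈ s, p k * (f k - μ) ^ 2 := by
  have hnonneg : ∀ k ∈ s, 0 ≤ p k * (f k - μ) ^ 2 := fun k hk => by
    have := hp k hk; positivity
  have hpos : ∀ k ∈ s, f k ≠ μ → 0 < p k * (f k - μ) ^ 2 := fun k hk hk' =>
    mul_pos (hp k hk) (sq_pos_of_ne_zero (sub_ne_zero.2 hk'))
  by_cases hfi : f i = μ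
  · exact sum_pos' hnonneg ⟨j, hj, hpos j hj fun h => hij (hfi.trans h.symm)⟩
  · exact sum_pos' hnonneg ⟨i, hi, hpos i hi hfi⟩

theorem eq_of_sum_sq_sub_div_nonpos (hp : ∀ i ∈ s, 0 < p i)
    (hq : ∀ i ∉ s, q i = 0) (hr : ∀ i ∉ s, r i = 0) (h : ∑ i ∈ s, (q i - r i) ^ 2 / p i ≤ 0) :
    q = r := by
  have hnonneg : ∀ i ∈ s, 0 ≤ (q i - r i) ^ 2 / p i := fun i hi => by
    have := hp i hi; positivity
  have hzero := (sum_eq_zero_iff_of_nonneg hnonneg).1 (h.antisymm (sum_nonneg hnonneg))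
  funext i
  by_cases hi : i ∈ s
  · have := hzero i hi
    rw [div_eq_zero_iff, or_iff_left (hp i hi).ne', sq_eq_zero_iff, sub_eq_zero] at this
    exact this
  · rw [hq i hi, hr i hi]

theorem sum_sq_sub_div_eq_of_support [Fintype α] (hp : ∀ i, p i ≠ 0) (hp1 : ∑ i, p i = 1)
    (hq1 : ∑ i, q i = 1) (hq : ∀ i ∉ s, q i = 0) :
    ∑ i, (q i - p i) ^ 2 / p i = ∑ i ∈ s, q i ^ 2 / p i - 1 := by
  have hexpand : ∀ i ∈ univ, (q i - p i) ^ 2 / p i = q i ^ 2 / p i - 2 * q i + p i :=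
    fun i _ => by field_simp [hp i]; ring
  have hsupp : ∑ i ∈ s, q i ^ 2 / p i = ∑ i, q i ^ 2 / p i :=
    sum_subset (subset_univ s) fun i _ hi => by rw [hq i hi]; ring
  rw [sum_congr rfl hexpand, sum_add_distrib, sum_sub_distrib, ← mul_sum, hq1, hp1, hsupp]
  ring

theorem sum_eq_one_of_tilt [Fintype α] (hm0 : m ≠ 0) (hm : ∑ i ∈ s, p i = m)
    (hμ : ∑ i ∈ s, p i * f i = m * μ) (hr : ∀ i ∈ s, r i = p i / m - c * (p i * (f i - μ)))
    (hr' : ∀ i ∉ s, r i = 0) :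
    ∑ i, r i = 1 := by
  rw [← sum_subset (subset_univ s) fun i _ hi => hr' i hi, sum_congr rfl hr, sum_sub_distrib,
    ← sum_div, ← mul_sum, hm, sum_mul_sub_eq_zero_of_mean hm hμ, div_self hm0, mul_zero, sub_zero]

theorem sum_mul_eq_of_tilt [Fintype α] (hm0 : m ≠ 0) (hm : ∑ i ∈ s, p i = m)
    (hμ : ∑ i ∈ s, p i * f i = m * μ) (hr : ∀ i ∈ s, r i = p i / m - c * (p i * (f i - μ)))
    (hr' : ∀ i ∉ s, r i = 0) :
    ∑ i, r i * f i = μ - c * ∑ i ∈ s, p i * (f i - μ) ^ 2 := by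
  have hexpand : ∀ i ∈ s, r i * f i
      = 1 / m * (p i * f i) - c * (p i * (f i - μ) ^ 2) - c * μ * (p i * (f i - μ)) :=
    fun i hi => by rw [hr i hi]; ring
  rw [← sum_subset (subset_univ s) fun i _ hi => by rw [hr' i hi, zero_mul], sum_congr rfl hexpand,
    sum_sub_distrib, sum_sub_distrib, ← mul_sum, ← mul_sum, ← mul_sum, hμ,
    sum_mul_sub_eq_zero_of_mean hm hμ]
  field_simp
  ring

theorem sum_sq_sub_div_of_tilt [Fintype α] (hm0 : m ≠ 0) (hm : ∑ i ∈ s, p i = m)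
    (hμ : ∑ i ∈ s, p i * f i = m * μ) (hr : ∀ i ∈ s, r i = p i / m - c * (p i * (f i - μ)))
    (hp : ∀ i, p i ≠ 0) (hp1 : ∑ i, p i = 1) (hq1 : ∑ i, q i = 1)
    (hq : ∀ i ∉ s, q i = 0) :
    ∑ i ∈ s, (q i - r i) ^ 2 / p i = ∑ i, (q i - p i) ^ 2 / p i + 1 - 1 / m
      + 2 * c * (∑ i, q i * f i - μ) + c ^ 2 * ∑ i ∈ s, p i * (f i - μ) ^ 2 := by
  have hexpand : ∀ i ∈ s, (q i - r i) ^ 2 / p i = q i ^ 2 / p i - 2 / m * q i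
      + 2 * c * (q i * f i - μ * q i) + 1 / m ^ 2 * p i - 2 * c / m * (p i * (f i - μ))
      + c ^ 2 * (p i * (f i - μ) ^ 2) := fun i hi => by
    rw [hr i hi]
    field_simp [hp i]
    ring
  have hq1' : ∑ i ∈ s, q i = 1 := by rwa [sum_subset (subset_univ s) fun i _ hi => hq i hi]
  rw [sum_congr rfl hexpand, sum_sq_sub_div_eq_of_support hp hp1 hq1 hq,
    ← sum_subset (subset_univ s) fun i _ hi => by rw [hq i hi, zero_mul]]
  simp only [sum_add_distrib, sum_sub_distrib, ← mul_sum, hq1', hm,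
    sum_mul_sub_eq_zero_of_mean hm hμ]
  field_simp
  ring

end WeightedSums

theorem isLeast_sum_mul_image_chi2Ball {ι : Type*} [Fintype ι] [DecidableEq ι] {p f : ι → ℝ}
    {S : Finset ι} {δ m μ σ2 : ℝ} (hp0 : ∀ i, 0 < p i) (hp1 : ∑ i, p i = 1) {a b : ι}
    (ha : a ∈ S) (hb : b ∈ S) (hab : f a ≠ f b)
    (hm : m = ∑ i ∈ S, p i) (hμ : μ = (1 / m) * ∑ i ∈ S, p i * f i)
    (hσ2 : σ2 = (1 / m) * ∑ i ∈ S, p i * (f i - μ) ^ 2)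
    (hδ : (1 - m) / m ≤ δ) {Q : Set (ι → ℝ)}
    (hQ : Q = {q | ∑ i, q i = 1 ∧ ∑ i, (q i - p i) ^ 2 / p i ≤ δ ∧ ∀ i ∉ S, q i = 0})
    {q₀ : ι → ℝ}
    (hq₀ : q₀ = fun i => if i ∈ S then
      (p i / m) * (1 - ((f i - μ) / √σ2) * √(m * δ - (1 - m))) else 0) :
    IsLeast ((fun q => ∑ i, q i * f i) '' Q) (μ - √σ2 * √(m * δ - (1 - m))) ∧
      q₀ ∈ Q ∧ ∑ i, q₀ i * f i = μ - √σ2 * √(m * δ - (1 - m)) ∧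
      ∀ q ∈ Q, ∑ i, q i * f i = μ - √σ2 * √(m * δ - (1 - m)) → q = q₀ := by
  subst hQ
  set s := √σ2
  set t := √(m * δ - (1 - m))
  have hm0 : 0 < m := hm ▸ sum_pos (fun i _ => hp0 i) ⟨a, ha⟩
  have hσ2pos : 0 < σ2 := hσ2 ▸
    mul_pos (one_div_pos.2 hm0) (sum_mul_sq_sub_pos_of_ne (fun i _ => hp0 i) ha hb hab μ)
  have hs : 0 < s := Real.sqrt_pos.2 hσ2pos
  have ht2 : t ^ 2 = m * δ - (1 - m) :=
    Real.sq_sqrt (by have := (div_le_iff₀ hm0).1 hδ; linarith)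
  have hmS : ∑ i ∈ S, p i = m := hm.symm
  have hμS : ∑ i ∈ S, p i * f i = m * μ := by rw [hμ]; field_simp
  have hV : ∑ i ∈ S, p i * (f i - μ) ^ 2 = m * s ^ 2 := by
    rw [Real.sq_sqrt hσ2pos.le, hσ2]; field_simp
  set c := t / (m * s)
  have hq₀S : ∀ i ∈ S, q₀ i = p i / m - c * (p i * (f i - μ)) := fun i hi => by
    simp only [hq₀, if_pos hi, c]
    field_simp
  have hq₀S' : ∀ i ∉ S, q₀ i = 0 := fun i hi => by simp only [hq₀, if_neg hi]
  have key : ∀ q : ι → ℝ, ∑ i, q i = 1 → (∀ i ∉ S, q i = 0) →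
      ∑ i ∈ S, (q i - q₀ i) ^ 2 / p i
        = ∑ i, (q i - p i) ^ 2 / p i - δ + 2 * c * (∑ i, q i * f i - (μ - s * t)) := by
    intro q hq1 hqS
    rw [sum_sq_sub_div_of_tilt hm0.ne' hmS hμS hq₀S (fun i => (hp0 i).ne') hp1 hq1 hqS, hV]
    simp only [c]
    field_simp
    linear_combination (-s) * ht2
  have hq₀E : ∑ i, q₀ i * f i = μ - s * t := by
    rw [sum_mul_eq_of_tilt hm0.ne' hmS hμS hq₀S hq₀S', hV]
    simp only [c]
    field_simp
  have hq₀Q : q₀ ∈ {q | ∑ i, q i = 1 ∧ ∑ i, (q i - p i) ^ 2 / p i ≤ δ ∧ ∀ i ∉ S, q i = 0} := by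
    have hq₀1 := sum_eq_one_of_tilt hm0.ne' hmS hμS hq₀S hq₀S'
    have := key q₀ hq₀1 hq₀S'
    simp only [sub_self, ne_eq, OfNat.ofNat_ne_zero, not_false_eq_true, zero_pow, zero_div,
      sum_const_zero, hq₀E, mul_zero, add_zero] at this
    exact ⟨hq₀1, by linarith, hq₀S'⟩
  obtain ⟨hleast, huniq⟩ := isLeast_image_and_eq_of_le_mul_sub
    (E := fun q => ∑ i, q i * f i) (D := fun q => ∑ i ∈ S, (q i - q₀ i) ^ 2 / p i)
    (by positivity : 0 ≤ 2 * c) hq₀Q hq₀E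
    (fun q ⟨hq1, hχ, hqS⟩ => by simp only [key q hq1 hqS]; linarith)
    (fun q ⟨_, _, hqS⟩ hD => eq_of_sum_sq_sub_div_nonpos (fun i _ => hp0 i) hqS hq₀S' hD)
  exact ⟨hleast, hq₀Q, hq₀E, huniq⟩

theorem chi2_Qk_min_general
    (n : ℕ) (hn : 0 < n) (f p : Fin n → ℝ)
    (hp0 : ∀ i, 0 < p i) (hp1 : ∑ i, p i = 1)
    (δ : ℝ)
    (ℓ : Fin n)
    (hℓmax : ∀ i, f i = f ⟨0, hn⟩ → i ≤ ℓ)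
    (k : Fin n) (hk : ℓ < k)
    (m μ σ2 : ℝ)
    (hm : m = ∑ i ∈ Finset.Iic k, p i)
    (hμ : μ = (1 / m) * ∑ i ∈ Finset.Iic k, p i * f i)
    (hσ2 : σ2 = (1 / m) * ∑ i ∈ Finset.Iic k, p i * (f i - μ) ^ 2)
    (hδ' : (1 - m) / m ≤ δ)
    (Qk : Set (Fin n → ℝ))
    (hQk : Qk = {q | ∑ i, q i = 1 ∧
      ∑ i, (q i - p i) ^ 2 / p i ≤ δ ∧ ∀ i, k < i → q i = 0})
    (qk : Fin n → ℝ)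
    (hqk : qk = fun i =>
      if i ≤ k then
        (p i / m) * (1 - ((f i - μ) / Real.sqrt σ2) * Real.sqrt (m * δ - (1 - m)))
      else 0) :
    IsLeast ((fun q : Fin n → ℝ => ∑ i, q i * f i) '' Qk)
        (μ - Real.sqrt σ2 * Real.sqrt (m * δ - (1 - m))) ∧
      qk ∈ Qk ∧
      (∑ i, qk i * f i) = μ - Real.sqrt σ2 * Real.sqrt (m * δ - (1 - m)) ∧
      (∀ q ∈ Qk, (∑ i, q i * f i) = μ - Real.sqrt σ2 * Real.sqrt (m * δ - (1 - m)) →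
        q = qk) := by
  have hfk : f k ≠ f ⟨0, hn⟩ := fun h => (hℓmax k h).not_gt hk
  have h0 : (⟨0, hn⟩ : Fin n) ∈ Iic k := mem_Iic.2 (Fin.mk_le_of_le_val (Nat.zero_le _))
  refine isLeast_sum_mul_image_chi2Ball hp0 hp1 (mem_Iic.2 le_rfl) h0 hfk hm hμ hσ2 hδ' ?_ ?_
  · simp only [hQk, mem_Iic, not_le]
  · simp only [hqk, mem_Iic]

/-- For `k > ℓ` with `δ ≥ (1-m_k)/m_k`, the minimum of `E_q(f)` over `Q_k` is
`μ_k - σ_k·√(m_k·δ - (1-m_k))`, attained uniquely by the explicit `q_k`. -/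
theorem chi2_Qk_min
    (n : ℕ) (hn : 0 < n) (f p : Fin n → ℝ) (hf : Monotone f)
    (hp0 : ∀ i, 0 < p i) (hp1 : ∑ i, p i = 1)
    (δ : ℝ) (hδ : 0 ≤ δ)
    (ℓ : Fin n) (hℓ : f ℓ = f ⟨0, hn⟩)
    (hℓmax : ∀ i, f i = f ⟨0, hn⟩ → i ≤ ℓ)
    (k : Fin n) (hk : ℓ < k)
    (m μ σ2 : ℝ)
    (hm : m = ∑ i ∈ Finset.Iic k, p i)
    (hμ : μ = (1 / m) * ∑ i ∈ Finset.Iic k, p i * f i)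
    (hσ2 : σ2 = (1 / m) * ∑ i ∈ Finset.Iic k, p i * (f i - μ) ^ 2)
    (hδ' : (1 - m) / m ≤ δ)
    (Qk : Set (Fin n → ℝ))
    (hQk : Qk = {q | ∑ i, q i = 1 ∧
      ∑ i, (q i - p i) ^ 2 / p i ≤ δ ∧ ∀ i, k < i → q i = 0})
    (qk : Fin n → ℝ)
    (hqk : qk = fun i =>
      if i ≤ k then
        (p i / m) * (1 - ((f i - μ) / Real.sqrt σ2) * Real.sqrt (m * δ - (1 - m)))
      else 0) :
    IsLeast ((fun q : Fin n → ℝ => ∑ i, q i * f i) '' Qk)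
        (μ - Real.sqrt σ2 * Real.sqrt (m * δ - (1 - m))) ∧
      qk ∈ Qk ∧
      (∑ i, qk i * f i) = μ - Real.sqrt σ2 * Real.sqrt (m * δ - (1 - m)) ∧
      (∀ q ∈ Qk, (∑ i, q i * f i) = μ - Real.sqrt σ2 * Real.sqrt (m * δ - (1 - m)) →
        q = qk) :=
  chi2_Qk_min_general n hn f p hp0 hp1 δ ℓ hℓmax k hk m μ σ2 hm hμ hσ2 hδ' Qk hQk qk hqk
end

section
/- With q_k the unique minimizer of E_q(f) over Q_k (for k > ℓ and δ ≥ (1-m_k)/m_k), one has q_k(x_k) > 0 if and only if δ < δ_k, and q_k(x_k) = 0 if and only if δ = δ_k, where δ_k = (1/m_k)·(σ_k²/(f(x_k)-μ_k)² + 1 - m_k). Moreover q_k(x_k) > 0 implies q_k(x_i) > 0 for all i ≤ k. -/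
/-!
Writing `A = f(x_k) - μ_k > 0` and `t = m_k δ - (1 - m_k)`, the sign of `q_k(x_k)` is that of
`1 - (A / σ_k) √t`, which is positive exactly when `t < σ_k² / A²`, i.e. when `δ < δ_k`.
`A > 0` because `x_k` lies strictly above the bottom level set of `f`, so the mean `μ_k` of `f`
over `x_1, …, x_k` is strictly below `f(x_k)`. Since `q_k(x_i)` is decreasing in `f(x_i)` and `f`
is monotone, positivity at `x_k` propagates to every `x_i` with `i ≤ k`.
-/

open Finset

lemma weighted_mean_lt {ι : Type*} {s : Finset ι} {w g : ι → ℝ} {b : ℝ}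
    (hw : ∀ i ∈ s, 0 < w i) (hg : ∀ i ∈ s, g i ≤ b) (hlt : ∃ i ∈ s, g i < b) :
    (1 / ∑ i ∈ s, w i) * ∑ i ∈ s, w i * g i < b := by
  obtain ⟨j, hj, hgj⟩ := hlt
  have hW : 0 < ∑ i ∈ s, w i := sum_pos hw ⟨j, hj⟩
  rw [one_div_mul_eq_div, div_lt_iff₀' hW, sum_mul]
  exact sum_lt_sum (fun i hi => by gcongr; exacts [(hw i hi).le, hg i hi])
    ⟨j, hj, by gcongr; exact hw j hj⟩

lemma weighted_variance_pos {ι : Type*} {s : Finset ι} {w g : ι → ℝ} {μ : ℝ}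
    (hw : ∀ i ∈ s, 0 < w i) (hne : ∃ i ∈ s, g i ≠ μ) :
    0 < (1 / ∑ i ∈ s, w i) * ∑ i ∈ s, w i * (g i - μ) ^ 2 := by
  obtain ⟨j, hj, hgj⟩ := hne
  have hW : 0 < ∑ i ∈ s, w i := sum_pos hw ⟨j, hj⟩
  refine mul_pos (by positivity) (sum_pos' (fun i hi => ?_) ⟨j, hj, ?_⟩)
  · exact mul_nonneg (hw i hi).le (sq_nonneg _)
  · exact mul_pos (hw j hj) (by have := sub_ne_zero.2 hgj; positivity)

/-- For `t < 0` both sides hold, since then `√t = 0`. -/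
lemma one_sub_div_sqrt_mul_sqrt_pos_iff {a b t : ℝ} (ha : 0 < a) (hb : 0 < b) :
    0 < 1 - a / √b * √t ↔ t < b / a ^ 2 := by
  rw [sub_pos, div_mul_eq_mul_div, div_lt_one (Real.sqrt_pos.2 hb), ← lt_div_iff₀' ha,
    Real.sqrt_lt' (by positivity), div_pow, Real.sq_sqrt hb.le]

lemma one_sub_div_sqrt_mul_sqrt_eq_zero_iff {a b t : ℝ} (ha : 0 < a) (hb : 0 < b) :
    1 - a / √b * √t = 0 ↔ t = b / a ^ 2 := by
  rw [sub_eq_zero, eq_comm, div_mul_eq_mul_div, div_eq_one_iff_eq (Real.sqrt_pos.2 hb).ne',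
    mul_comm, ← eq_div_iff ha.ne', Real.sqrt_eq_iff_mul_self_eq_of_pos (by positivity),
    ← sq, div_pow, Real.sq_sqrt hb.le, eq_comm]

lemma lt_one_div_mul_add_one_sub_iff {m δ c : ℝ} (hm : 0 < m) :
    δ < (1 / m) * (c + 1 - m) ↔ m * δ - (1 - m) < c := by
  rw [one_div_mul_eq_div, lt_div_iff₀' hm]
  constructor <;> intro h <;> linarith

lemma eq_one_div_mul_add_one_sub_iff {m δ c : ℝ} (hm : 0 < m) :
    δ = (1 / m) * (c + 1 - m) ↔ m * δ - (1 - m) = c := by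
  rw [one_div_mul_eq_div, eq_div_iff hm.ne']
  constructor <;> intro h <;> linarith

theorem chi2_qk_positivity_general
    (n : ℕ) (hn : 0 < n) (f p : Fin n → ℝ) (hf : Monotone f)
    (hp0 : ∀ i, 0 < p i)
    (δ : ℝ)
    (ℓ : Fin n)
    (hℓmax : ∀ i, f i = f ⟨0, hn⟩ → i ≤ ℓ)
    (k : Fin n) (hk : ℓ < k)
    (m μ σ2 δk : ℝ)
    (hm : m = ∑ i ∈ Finset.Iic k, p i)
    (hμ : μ = (1 / m) * ∑ i ∈ Finset.Iic k, p i * f i)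
    (hσ2 : σ2 = (1 / m) * ∑ i ∈ Finset.Iic k, p i * (f i - μ) ^ 2)
    (hδk : δk = (1 / m) * (σ2 / (f k - μ) ^ 2 + 1 - m))
    (qk : Fin n → ℝ)
    (hqk : qk = fun i =>
      if i ≤ k then
        (p i / m) * (1 - ((f i - μ) / Real.sqrt σ2) * Real.sqrt (m * δ - (1 - m)))
      else 0) :
    (0 < qk k ↔ δ < δk) ∧
      (qk k = 0 ↔ δ = δk) ∧
      (0 < qk k → ∀ i ≤ k, 0 < qk i) := by
  have hkk : k ∈ Iic k := mem_Iic.2 le_rfl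
  have hm0 : 0 < m := hm ▸ sum_pos (fun i _ => hp0 i) ⟨k, hkk⟩
  have h0k : (⟨0, hn⟩ : Fin n) ≤ k := Nat.zero_le _
  have hf0k : f ⟨0, hn⟩ < f k :=
    (hf h0k).lt_of_ne fun h => hk.not_ge (hℓmax k h.symm)
  have hμk : 0 < f k - μ := by
    rw [sub_pos, hμ, hm]
    exact weighted_mean_lt (fun i _ => hp0 i) (fun i hi => hf (mem_Iic.1 hi))
      ⟨_, mem_Iic.2 h0k, hf0k⟩
  have hσ2 : 0 < σ2 :=
    hσ2 ▸ hm ▸ weighted_variance_pos (fun i _ => hp0 i) ⟨k, hkk, sub_ne_zero.1 hμk.ne'⟩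
  have hqk_le : ∀ i ≤ k, qk i =
      (p i / m) * (1 - ((f i - μ) / Real.sqrt σ2) * Real.sqrt (m * δ - (1 - m))) := by
    intro i hi
    simp only [hqk, if_pos hi]
  have hpk : 0 < p k / m := div_pos (hp0 k) hm0
  refine ⟨?_, ?_, fun hpos i hik => ?_⟩
  · rw [hqk_le k le_rfl, mul_pos_iff_of_pos_left hpk, one_sub_div_sqrt_mul_sqrt_pos_iff hμk hσ2,
      hδk, lt_one_div_mul_add_one_sub_iff hm0]
  · rw [hqk_le k le_rfl, mul_eq_zero, or_iff_right hpk.ne',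
      one_sub_div_sqrt_mul_sqrt_eq_zero_iff hμk hσ2, hδk, eq_one_div_mul_add_one_sub_iff hm0]
  · rw [hqk_le k le_rfl, mul_pos_iff_of_pos_left hpk] at hpos
    rw [hqk_le i hik]
    refine mul_pos (div_pos (hp0 i) hm0) (hpos.trans_le ?_)
    gcongr
    exact hf hik

/-- Positivity of the minimizer `q_k` at `x_k`: `q_k(x_k) > 0 ↔ δ < δ_k` and
`q_k(x_k) = 0 ↔ δ = δ_k`; moreover `q_k(x_k) > 0` implies `q_k(x_i) > 0` for `i ≤ k`. -/
theorem chi2_qk_positivity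
    (n : ℕ) (hn : 0 < n) (f p : Fin n → ℝ) (hf : Monotone f)
    (hp0 : ∀ i, 0 < p i) (hp1 : ∑ i, p i = 1)
    (δ : ℝ) (hδ : 0 ≤ δ)
    (ℓ : Fin n) (hℓ : f ℓ = f ⟨0, hn⟩)
    (hℓmax : ∀ i, f i = f ⟨0, hn⟩ → i ≤ ℓ)
    (k : Fin n) (hk : ℓ < k)
    (m μ σ2 δk : ℝ)
    (hm : m = ∑ i ∈ Finset.Iic k, p i)
    (hμ : μ = (1 / m) * ∑ i ∈ Finset.Iic k, p i * f i)
    (hσ2 : σ2 = (1 / m) * ∑ i ∈ Finset.Iic k, p i * (f i - μ) ^ 2)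
    (hδk : δk = (1 / m) * (σ2 / (f k - μ) ^ 2 + 1 - m))
    (hδ' : (1 - m) / m ≤ δ)
    (qk : Fin n → ℝ)
    (hqk : qk = fun i =>
      if i ≤ k then
        (p i / m) * (1 - ((f i - μ) / Real.sqrt σ2) * Real.sqrt (m * δ - (1 - m)))
      else 0) :
    (0 < qk k ↔ δ < δk) ∧
      (qk k = 0 ↔ δ = δk) ∧
      (0 < qk k → ∀ i ≤ k, 0 < qk i) :=
  chi2_qk_positivity_general n hn f p hf hp0 δ ℓ hℓmax k hk m μ σ2 δk hm hμ hσ2 hδk qk hqk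
end

section
/- The critical values δ_k are non-increasing in k: for all k ∈ {ℓ+1,...,n-1}, δ_k ≥ δ_{k+1}. -/
/-!
Let `R_k(t) = Σ_{i≤k} p_i (t - f_i)² / (Σ_{i≤k} p_i (t - f_i))²`; then `1 + δ_k = R_k(f_k)`.
By the parallel axis theorem `R_k(t) = 1/m_k + V_k/(m_k (t - μ_k))²` with `V_k ≥ 0`, so `R_k`
decreases on `(μ_k, ∞)`. The point `x_{k+1}` contributes nothing to `R_{k+1}(f_{k+1})`, hence
`1 + δ_{k+1} = R_k(f_{k+1}) ≤ R_k(f_k)` because `μ_k < f_k ≤ f_{k+1}`.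
-/

open Finset

noncomputable def dispersionRatio {ι : Type*} (s : Finset ι) (p f : ι → ℝ) (t : ℝ) : ℝ :=
  (∑ i ∈ s, p i * (t - f i) ^ 2) / (∑ i ∈ s, p i * (t - f i)) ^ 2

theorem dispersionRatio_insert_self {ι : Type*} [DecidableEq ι] (s : Finset ι) (p f : ι → ℝ)
    (j : ι) : dispersionRatio (insert j s) p f (f j) = dispersionRatio s p f (f j) := by
  rw [dispersionRatio, dispersionRatio,
    sum_insert_zero (f := fun i => p i * (f j - f i) ^ 2) (by simp),
    sum_insert_zero (f := fun i => p i * (f j - f i)) (by simp)]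

section WeightedMean

variable {ι : Type*} {s : Finset ι} {p f : ι → ℝ} {m μ t : ℝ}

theorem sum_mul_sub_eq_mul_sub_mean (hm : ∑ i ∈ s, p i = m) (hm0 : m ≠ 0)
    (hμ : μ = 1 / m * ∑ i ∈ s, p i * f i) (t : ℝ) :
    ∑ i ∈ s, p i * (t - f i) = m * (t - μ) := by
  simp only [mul_sub, sum_sub_distrib, ← sum_mul, hm, hμ]
  field_simp

theorem sum_mul_sub_mean_eq_zero (hm : ∑ i ∈ s, p i = m) (hm0 : m ≠ 0)
    (hμ : μ = 1 / m * ∑ i ∈ s, p i * f i) : ∑ i ∈ s, p i * (f i - μ) = 0 := by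
  have h := sum_mul_sub_eq_mul_sub_mean hm hm0 hμ μ
  simp only [sub_self, mul_zero] at h
  rw [← neg_eq_zero, ← h, ← sum_neg_distrib]
  exact sum_congr rfl fun i _ => by ring

theorem sum_mul_sub_sq_eq (hm : ∑ i ∈ s, p i = m) (hm0 : m ≠ 0)
    (hμ : μ = 1 / m * ∑ i ∈ s, p i * f i) (t : ℝ) :
    ∑ i ∈ s, p i * (t - f i) ^ 2 = ∑ i ∈ s, p i * (f i - μ) ^ 2 + m * (t - μ) ^ 2 := by
  have hpoint : ∀ i ∈ s, p i * (t - f i) ^ 2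
      = p i * (f i - μ) ^ 2 + (t - μ) ^ 2 * p i - 2 * (t - μ) * (p i * (f i - μ)) :=
    fun i _ => by ring
  rw [sum_congr rfl hpoint, sum_sub_distrib, sum_add_distrib, ← mul_sum, ← mul_sum, hm,
    sum_mul_sub_mean_eq_zero hm hm0 hμ]
  ring

theorem dispersionRatio_eq (hm : ∑ i ∈ s, p i = m) (hm0 : m ≠ 0)
    (hμ : μ = 1 / m * ∑ i ∈ s, p i * f i) (ht : t ≠ μ) :
    dispersionRatio s p f t = (∑ i ∈ s, p i * (f i - μ) ^ 2) / (m * (t - μ)) ^ 2 + 1 / m := by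
  have htμ : t - μ ≠ 0 := sub_ne_zero.mpr ht
  rw [dispersionRatio, sum_mul_sub_sq_eq hm hm0 hμ, sum_mul_sub_eq_mul_sub_mean hm hm0 hμ]
  field_simp

theorem critical_eq_dispersionRatio_sub_one {σ2 : ℝ} (hm : ∑ i ∈ s, p i = m) (hm0 : m ≠ 0)
    (hμ : μ = 1 / m * ∑ i ∈ s, p i * f i) (hσ2 : σ2 = 1 / m * ∑ i ∈ s, p i * (f i - μ) ^ 2)
    (ht : t ≠ μ) :
    1 / m * (σ2 / (t - μ) ^ 2 + 1 - m) = dispersionRatio s p f t - 1 := by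
  have htμ : t - μ ≠ 0 := sub_ne_zero.mpr ht
  rw [dispersionRatio_eq hm hm0 hμ ht, hσ2]
  field_simp

theorem dispersionRatio_antitoneOn (hp : ∀ i ∈ s, 0 ≤ p i) (hm : ∑ i ∈ s, p i = m)
    (hm0 : 0 < m) (hμ : μ = 1 / m * ∑ i ∈ s, p i * f i) :
    AntitoneOn (dispersionRatio s p f) (Set.Ioi μ) := by
  intro t ht t' ht' htt'
  have hV : 0 ≤ ∑ i ∈ s, p i * (f i - μ) ^ 2 :=
    sum_nonneg fun i hi => mul_nonneg (hp i hi) (sq_nonneg _)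
  rw [dispersionRatio_eq hm hm0.ne' hμ (ne_of_gt ht),
    dispersionRatio_eq hm hm0.ne' hμ (ne_of_gt ht')]
  have hd : 0 < t - μ := sub_pos.mpr ht
  gcongr

theorem mean_lt_of_forall_le (hp : ∀ i ∈ s, 0 < p i) (hm : ∑ i ∈ s, p i = m)
    (hμ : μ = 1 / m * ∑ i ∈ s, p i * f i) (hf : ∀ i ∈ s, f i ≤ t) {j : ι} (hj : j ∈ s)
    (hfj : f j < t) : μ < t := by
  have hm0 : 0 < m := hm ▸ sum_pos (fun i hi => hp i hi) ⟨j, hj⟩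
  have hpos : 0 < ∑ i ∈ s, p i * (t - f i) :=
    sum_pos' (fun i hi => mul_nonneg (hp i hi).le (sub_nonneg.mpr (hf i hi)))
      ⟨j, hj, mul_pos (hp j hj) (sub_pos.mpr hfj)⟩
  rw [sum_mul_sub_eq_mul_sub_mean hm hm0.ne' hμ] at hpos
  exact sub_pos.mp (pos_of_mul_pos_right hpos hm0.le)

end WeightedMean

theorem chi2_delta_k_antitone_general
    (n : ℕ) (hn : 0 < n) (f p : Fin n → ℝ) (hf : Monotone f)
    (hp0 : ∀ i, 0 < p i)
    (ℓ : Fin n)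
    (hℓmax : ∀ i, f i = f ⟨0, hn⟩ → i ≤ ℓ)
    (k k' : Fin n) (hk : ℓ < k) (hk' : (k' : ℕ) = (k : ℕ) + 1) :
    let m : Fin n → ℝ := fun j => ∑ i ∈ Finset.Iic j, p i
    let μ : Fin n → ℝ := fun j => (1 / m j) * ∑ i ∈ Finset.Iic j, p i * f i
    let σ2 : Fin n → ℝ :=
      fun j => (1 / m j) * ∑ i ∈ Finset.Iic j, p i * (f i - μ j) ^ 2
    let δc : Fin n → ℝ :=
      fun j => (1 / m j) * (σ2 j / (f j - μ j) ^ 2 + 1 - m j)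
    δc k' ≤ δc k := by
  intro m μ σ2 δc
  have hm j : 0 < m j := sum_pos (fun i _ => hp0 i) ⟨j, mem_Iic.mpr le_rfl⟩
  have hμ j (hj : f ⟨0, hn⟩ < f j) : μ j < f j :=
    mean_lt_of_forall_le (fun i _ => hp0 i) rfl rfl (fun i hi => hf (mem_Iic.mp hi))
      (by simp [Fin.le_def]) hj
  have hδ j (hj : f ⟨0, hn⟩ < f j) : δc j = dispersionRatio (Iic j) p f (f j) - 1 :=
    critical_eq_dispersionRatio_sub_one rfl (hm j).ne' rfl rfl (hμ j hj).ne'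
  have hfk : f ⟨0, hn⟩ < f k :=
    (hf (by simp [Fin.le_def])).lt_of_ne fun h => (hℓmax k h.symm).not_gt hk
  have hfkk' : f k ≤ f k' := hf (by rw [Fin.le_def]; omega)
  have hIic : Iic k' = insert k' (Iic k) := by
    ext i
    simp only [mem_Iic, mem_insert, Fin.le_def, Fin.ext_iff]
    omega
  rw [hδ k hfk, hδ k' (hfk.trans_le hfkk'), hIic, dispersionRatio_insert_self]
  have hμk := hμ k hfk
  exact sub_le_sub_right (dispersionRatio_antitoneOn (fun i _ => (hp0 i).le) rfl (hm k) rfl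
    hμk (hμk.trans_le hfkk') hfkk') 1

/-- The critical radii `δ_k` are non-increasing: `δ_{k+1} ≤ δ_k` for `ℓ < k`. -/
theorem chi2_delta_k_antitone
    (n : ℕ) (hn : 0 < n) (f p : Fin n → ℝ) (hf : Monotone f)
    (hp0 : ∀ i, 0 < p i) (hp1 : ∑ i, p i = 1)
    (ℓ : Fin n) (hℓ : f ℓ = f ⟨0, hn⟩)
    (hℓmax : ∀ i, f i = f ⟨0, hn⟩ → i ≤ ℓ)
    (k k' : Fin n) (hk : ℓ < k) (hk' : (k' : ℕ) = (k : ℕ) + 1) :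
    let m : Fin n → ℝ := fun j => ∑ i ∈ Finset.Iic j, p i
    let μ : Fin n → ℝ := fun j => (1 / m j) * ∑ i ∈ Finset.Iic j, p i * f i
    let σ2 : Fin n → ℝ :=
      fun j => (1 / m j) * ∑ i ∈ Finset.Iic j, p i * (f i - μ j) ^ 2
    let δc : Fin n → ℝ :=
      fun j => (1 / m j) * (σ2 j / (f j - μ j) ^ 2 + 1 - m j)
    δc k' ≤ δc k :=
  chi2_delta_k_antitone_general n hn f p hf hp0 ℓ hℓmax k k' hk hk'
end

section
/- Let q ∈ B_{χ²}(p,δ) and let i,j satisfy q(x_i) = 0 and q(x_j) > 0. Then there exists ε with 0 < ε < q(x_j) such that the pmf q' obtained from q by moving mass ε from x_j to x_i satisfies d_{χ²}(q',p) < δ, i.e., q' ∈ B_{χ²}(p,δ); moreover E_{q'}(f) = E_q(f) + ε(f(x_i) - f(x_j)). -/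
open Finset

/-- Moving a small mass from a positive-mass point `x_j` to a zero-mass point
`x_i` keeps us strictly inside the χ² ball, and shifts the expectation by
`ε(f(x_i) - f(x_j))`. -/
theorem chi2_move_mass
    (n : ℕ) (f p : Fin n → ℝ)
    (hp0 : ∀ i, 0 < p i) (hp1 : ∑ i, p i = 1)
    (δ : ℝ) (hδ : 0 ≤ δ)
    (q : Fin n → ℝ) (hq0 : ∀ i, 0 ≤ q i) (hq1 : ∑ i, q i = 1)
    (hqB : ∑ i, (q i - p i) ^ 2 / p i ≤ δ)
    (i j : Fin n) (hij : i ≠ j) (hqi : q i = 0) (hqj : 0 < q j) :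
    ∃ ε : ℝ, 0 < ε ∧ ε < q j ∧
      ∀ q' : Fin n → ℝ,
        (q' = fun x => if x = i then ε else if x = j then q j - ε else q x) →
        ((∀ x, 0 ≤ q' x) ∧ ∑ x, q' x = 1) ∧
        ∑ x, (q' x - p x) ^ 2 / p x < δ ∧
        (∑ x, q' x * f x) = (∑ x, q x * f x) + ε * (f i - f j) := by
  have hpi := hp0 i
  have hpj := hp0 j
  have hA : 0 < p i + p j := by linarith
  set ε := min (q j / 2) (p i * q j / (p i + p j)) with hεdef
  have hε : 0 < ε := lt_min (by linarith) (by positivity)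
  have hεj : ε < q j := lt_of_le_of_lt (min_le_left _ _) (by linarith)
  have hεA : ε * (p i + p j) ≤ p i * q j := by
    have h := min_le_right (q j / 2) (p i * q j / (p i + p j))
    calc ε * (p i + p j) ≤ (p i * q j / (p i + p j)) * (p i + p j) :=
          mul_le_mul_of_nonneg_right h hA.le
      _ = p i * q j := by field_simp
  refine ⟨ε, hε, hεj, ?_⟩
  intro q' hq'
  have hji : j ≠ i := hij.symm
  set S := (Finset.univ.erase i).erase j with hS
  have split : ∀ h : Fin n → ℝ,
      ∑ x, h x = h i + (h j + ∑ x ∈ S, h x) := by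
    intro h
    rw [hS, Finset.add_sum_erase _ h (Finset.mem_erase.mpr ⟨hji, Finset.mem_univ j⟩),
        Finset.add_sum_erase _ h (Finset.mem_univ i)]
  have htail : ∀ x ∈ S, q' x = q x := by
    intro x hx
    rcases Finset.mem_erase.mp hx with ⟨hxj, hx'⟩
    rcases Finset.mem_erase.mp hx' with ⟨hxi, _⟩
    simp [hq', hxi, hxj]
  have hq'i : q' i = ε := by simp [hq']
  have hq'j : q' j = q j - ε := by simp [hq', hji]
  have hsumq : q i + (q j + ∑ x ∈ S, q x) = 1 := by rw [← split q]; exact hq1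
  refine ⟨⟨?_, ?_⟩, ?_, ?_⟩
  · intro x
    by_cases h1 : x = i
    · subst h1; rw [hq'i]; linarith
    · by_cases h2 : x = j
      · subst h2; rw [hq'j]; linarith
      · have : q' x = q x := by simp [hq', h1, h2]
        rw [this]; exact hq0 x
  · rw [split q', hq'i, hq'j, Finset.sum_congr rfl htail]
    linarith
  · have e1 : ∑ x, (q' x - p x) ^ 2 / p x
        = (q' i - p i) ^ 2 / p i + ((q' j - p j) ^ 2 / p j
          + ∑ x ∈ S, (q x - p x) ^ 2 / p x) := by
      rw [split fun x => (q' x - p x) ^ 2 / p x]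
      congr 2
      exact Finset.sum_congr rfl fun x hx => by rw [htail x hx]
    rw [split (fun x => (q x - p x) ^ 2 / p x)] at hqB
    rw [e1, hq'i, hq'j]
    have key2 : p j * (ε - p i) ^ 2 + p i * ((q j - ε) - p j) ^ 2
        < p j * (q i - p i) ^ 2 + p i * (q j - p j) ^ 2 := by
      rw [hqi]
      nlinarith [mul_pos hε (mul_pos hpi hqj), mul_pos hε hpi]
    have key : (ε - p i) ^ 2 / p i + ((q j - ε) - p j) ^ 2 / p j
        < (q i - p i) ^ 2 / p i + (q j - p j) ^ 2 / p j := by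
      rw [div_add_div _ _ hpi.ne' hpj.ne', div_add_div _ _ hpi.ne' hpj.ne',
        div_lt_div_iff₀ (by positivity) (by positivity)]
      nlinarith [key2, mul_pos hpi hpj]
    linarith
  · have e2 : ∑ x, q' x * f x
        = q' i * f i + (q' j * f j + ∑ x ∈ S, q x * f x) := by
      rw [split fun x => q' x * f x]
      congr 2
      exact Finset.sum_congr rfl fun x hx => by rw [htail x hx]
    rw [e2, split (fun x => q x * f x), hq'i, hq'j, hqi]
    ring
end

section
/- There exist a minimizer q* of E_q(f) over B_{χ²}(p,δ) and an index k* ≥ ℓ such that q*(x_i) > 0 for all i ≤ k* and q*(x_i) = 0 for all i > k* (i.e., the support of some optimal q* is a down-set {x_1,...,x_{k*}} with k* ≥ ℓ). -/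
/-!
On the χ² ball the linear objective `q ↦ ∑ qᵢ fᵢ` attains its minimum by compactness; among its
minimizers take one whose support is maximal. If such a `q` had `qᵢ = 0 < qⱼ` with `fᵢ ≤ fⱼ`, moving
a little mass from `j` to `i` would not increase the objective and would stay in the ball, since the
directional derivative of the χ² divergence along `eᵢ - eⱼ` is `-2 qⱼ / pⱼ < 0`; this enlarges the
support. Hence the support is a lower set for `f`, and so an initial segment containing `ℓ`.
-/

open Finset Function

variable {ι : Type*}

noncomputable def chi2Div [Fintype ι] (q p : ι → ℝ) : ℝ := ∑ i, (q i - p i) ^ 2 / p i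

def chi2Ball [Fintype ι] (p : ι → ℝ) (δ : ℝ) : Set (ι → ℝ) :=
  {q | ((∀ i, 0 ≤ q i) ∧ ∑ i, q i = 1) ∧ chi2Div q p ≤ δ}

section Chi2Ball

variable [Fintype ι] {p : ι → ℝ} {δ : ℝ}

lemma self_mem_chi2Ball (hp0 : ∀ i, 0 ≤ p i) (hp1 : ∑ i, p i = 1) (hδ : 0 ≤ δ) :
    p ∈ chi2Ball p δ :=
  ⟨⟨hp0, hp1⟩, by simpa [chi2Div] using hδ⟩

lemma continuous_chi2Div (p : ι → ℝ) : Continuous fun q => chi2Div q p := by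
  unfold chi2Div
  fun_prop

lemma isCompact_chi2Ball (p : ι → ℝ) (δ : ℝ) : IsCompact (chi2Ball p δ) := by
  refine (isCompact_Icc (a := 0) (b := 1)).of_isClosed_subset ?_ ?_
  · refine ((isClosed_le continuous_const continuous_id).inter ?_).inter ?_
    · exact isClosed_eq (continuous_finsetSum _ fun i _ => continuous_apply i) continuous_const
    · exact isClosed_le (continuous_chi2Div p) continuous_const
  · rintro q ⟨⟨hq0, hq1⟩, -⟩
    exact ⟨hq0, fun i => (single_le_sum (fun k _ => hq0 k) (mem_univ i)).trans_eq hq1⟩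

end Chi2Ball

section Transfer

variable [DecidableEq ι] {q p : ι → ℝ} {i j k : ι} {ε : ℝ}

def transfer (q : ι → ℝ) (i j : ι) (ε : ℝ) : ι → ℝ :=
  q + ε • (Pi.single i 1 - Pi.single j 1)

lemma transfer_apply_left (hij : i ≠ j) : transfer q i j ε i = q i + ε := by
  simp [transfer, hij]

lemma transfer_apply_right (hij : i ≠ j) : transfer q i j ε j = q j - ε := by
  simp [transfer, hij.symm, sub_eq_add_neg]

lemma transfer_apply_of_ne (hki : k ≠ i) (hkj : k ≠ j) : transfer q i j ε k = q k := by
  simp [transfer, hki, hkj]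

section Sum

variable [Fintype ι]

lemma sum_transfer_mul (f : ι → ℝ) :
    ∑ k, transfer q i j ε k * f k = ∑ k, q k * f k + ε * (f i - f j) := by
  simp [transfer, Pi.single_apply, add_mul, sub_mul, sum_add_distrib,
    sum_sub_distrib, mul_sub]

lemma sum_transfer : ∑ k, transfer q i j ε k = ∑ k, q k := by
  simpa using sum_transfer_mul (q := q) (i := i) (j := j) (ε := ε) 1

lemma chi2Div_transfer (hij : i ≠ j) :
    chi2Div (transfer q i j ε) p = chi2Div q p +
      ε * (2 * ((q i - p i) / p i - (q j - p j) / p j) + ε * (1 / p i + 1 / p j)) := by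
  have h := Fintype.sum_eq_add i j hij
    (f := fun k => (transfer q i j ε k - p k) ^ 2 / p k - (q k - p k) ^ 2 / p k)
    (fun k hk => by simp [transfer_apply_of_ne hk.1 hk.2])
  simp only [sum_sub_distrib, transfer_apply_left hij, transfer_apply_right hij] at h
  unfold chi2Div
  rw [sub_eq_iff_eq_add'] at h
  rw [h]
  ring

lemma exists_transfer_mem_chi2Ball {δ : ℝ} (hp : ∀ k, 0 < p k) (hq : q ∈ chi2Ball p δ)
    (hij : i ≠ j) (hqi : q i = 0) (hqj : 0 < q j) :
    ∃ ε, 0 < ε ∧ ε < q j ∧ transfer q i j ε ∈ chi2Ball p δ := by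
  obtain ⟨⟨hq0, hq1⟩, hqδ⟩ := hq
  have hpi := hp i
  have hpj := hp j
  -- this choice of `ε` makes the second-order term cancel half of the first-order one
  set ε := q j * p i / (p i + p j) with hε
  have hε0 : 0 < ε := by positivity
  have hεj : ε < q j := by
    rw [hε, div_lt_iff₀ (by positivity)]
    nlinarith
  have hdecr : ε * (2 * ((q i - p i) / p i - (q j - p j) / p j) + ε * (1 / p i + 1 / p j))
      = -(ε * (q j / p j)) := by
    rw [hqi, hε]
    field_simp
    ring
  refine ⟨ε, hε0, hεj, ⟨⟨fun k => ?_, sum_transfer.trans hq1⟩, ?_⟩⟩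
  · by_cases hki : k = i
    · subst hki; rw [transfer_apply_left hij]; linarith [hq0 k]
    by_cases hkj : k = j
    · subst hkj; rw [transfer_apply_right hij]; linarith
    rw [transfer_apply_of_ne hki hkj]; exact hq0 k
  · rw [chi2Div_transfer hij, hdecr]
    have : 0 ≤ ε * (q j / p j) := by positivity
    linarith

end Sum

end Transfer

lemma exists_isMinOn_maximalFor_support {M : Type*} [Zero M] [TopologicalSpace M] {α : Type*}
    [Finite α] {K : Set (α → M)} (hK : IsCompact K) (hne : K.Nonempty) {g : (α → M) → ℝ}
    (hg : ContinuousOn g K) : ∃ q, MaximalFor (fun q => q ∈ K ∧ IsMinOn g K q) support q := by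
  obtain ⟨q₀, hq₀, hmin⟩ := hK.exists_isMinOn hne hg
  exact Set.Finite.exists_maximalFor' support {q | q ∈ K ∧ IsMinOn g K q} (Set.toFinite _)
    ⟨q₀, hq₀, hmin⟩

lemma pos_of_le_of_maximalFor_support [Fintype ι] {p f q : ι → ℝ} {δ : ℝ} {i j : ι}
    (hp : ∀ k, 0 < p k)
    (hq : MaximalFor (fun q => q ∈ chi2Ball p δ ∧
      IsMinOn (fun q => ∑ k, q k * f k) (chi2Ball p δ) q) support q)
    (hqj : 0 < q j) (hfij : f i ≤ f j) : 0 < q i := by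
  classical
  obtain ⟨⟨hqB, hmin⟩, hmax⟩ := hq
  by_contra hqi
  replace hqi : q i = 0 := le_antisymm (not_lt.1 hqi) (hqB.1.1 i)
  have hij : i ≠ j := by rintro rfl; linarith
  obtain ⟨ε, hε0, hεj, hq'B⟩ := exists_transfer_mem_chi2Ball hp hqB hij hqi hqj
  have hq'min : IsMinOn (fun q => ∑ k, q k * f k) (chi2Ball p δ) (transfer q i j ε) := by
    refine isMinOn_iff.2 fun r hr => ?_
    have : ε * (f i - f j) ≤ 0 := mul_nonpos_of_nonneg_of_nonpos hε0.le (by linarith)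
    rw [sum_transfer_mul]
    linarith [isMinOn_iff.1 hmin r hr]
  have hsupp : support q ⊆ support (transfer q i j ε) := by
    intro k hk
    by_cases hkj : k = j
    · subst hkj; simp only [mem_support, transfer_apply_right hij]; linarith
    have hki : k ≠ i := by rintro rfl; exact hk hqi
    simpa [mem_support, transfer_apply_of_ne hki hkj] using hk
  have hi : i ∈ support (transfer q i j ε) := by
    simp only [mem_support, transfer_apply_left hij, hqi]; linarith
  exact hmax ⟨hq'B, hq'min⟩ hsupp hi hqi

lemma exists_eq_Iic_of_isLowerSet {α : Type*} [LinearOrder α] [Finite α] {s : Set α}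
    (hs : IsLowerSet s) (hne : s.Nonempty) : ∃ k, s = Set.Iic k := by
  obtain ⟨k, hk, hmax⟩ := Set.exists_max_image s id (Set.toFinite s) hne
  exact ⟨k, Set.ext fun x => ⟨hmax x, fun hx => hs hx hk⟩⟩

theorem chi2_exists_minimizer_with_downset_support_general
    (n : ℕ) (hn : 0 < n) (f p : Fin n → ℝ) (hf : Monotone f)
    (hp0 : ∀ i, 0 < p i) (hp1 : ∑ i, p i = 1)
    (δ : ℝ) (hδ : 0 ≤ δ)
    (ℓ : Fin n) (hℓ : f ℓ = f ⟨0, hn⟩) :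
    let B : Set (Fin n → ℝ) :=
      {q | ((∀ i, 0 ≤ q i) ∧ ∑ i, q i = 1) ∧ ∑ i, (q i - p i) ^ 2 / p i ≤ δ}
    ∃ qstar ∈ B, ∃ kstar : Fin n, ℓ ≤ kstar ∧
      (∀ q ∈ B, (∑ i, qstar i * f i) ≤ ∑ i, q i * f i) ∧
      (∀ i, i ≤ kstar → 0 < qstar i) ∧
      (∀ i, kstar < i → qstar i = 0) := by
  intro B
  obtain ⟨q, hq⟩ := exists_isMinOn_maximalFor_support (isCompact_chi2Ball p δ)
    ⟨p, self_mem_chi2Ball (fun i => (hp0 i).le) hp1 hδ⟩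
    (g := fun q => ∑ k, q k * f k) (by fun_prop)
  obtain ⟨hqB, hqmin⟩ := hq.1
  have hpos {i j} : 0 < q j → f i ≤ f j → 0 < q i := pos_of_le_of_maximalFor_support hp0 hq
  have hne : ∃ i, 0 < q i := by
    obtain ⟨i, -, hi⟩ := exists_lt_of_sum_lt (s := univ) (f := 0) (g := q) (by simp [hqB.1.2])
    exact ⟨i, hi⟩
  obtain ⟨k, hk⟩ := exists_eq_Iic_of_isLowerSet (s := {i | 0 < q i})
    (fun i j hji hi => hpos hi (hf hji)) hne
  have hk_pos : ∀ i, 0 < q i ↔ i ≤ k := fun i => Set.ext_iff.1 hk i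
  have hℓk : f ℓ ≤ f k := hℓ ▸ hf (Nat.zero_le _)
  refine ⟨q, hqB, k, (hk_pos ℓ).1 (hpos ((hk_pos k).2 le_rfl) hℓk), isMinOn_iff.1 hqmin,
    fun i hi => (hk_pos i).2 hi, fun i hi => ?_⟩
  exact le_antisymm (not_lt.1 fun h => hi.not_ge ((hk_pos i).1 h)) (hqB.1.1 i)

/-- Some minimizer of the expectation over the χ² ball has support equal to a
down-set `{x_1,...,x_{k*}}` with `k* ≥ ℓ`. -/
theorem chi2_exists_minimizer_with_downset_support
    (n : ℕ) (hn : 0 < n) (f p : Fin n → ℝ) (hf : Monotone f)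
    (hp0 : ∀ i, 0 < p i) (hp1 : ∑ i, p i = 1)
    (δ : ℝ) (hδ : 0 ≤ δ)
    (ℓ : Fin n) (hℓ : f ℓ = f ⟨0, hn⟩)
    (hℓmax : ∀ i, f i = f ⟨0, hn⟩ → i ≤ ℓ) :
    let B : Set (Fin n → ℝ) :=
      {q | ((∀ i, 0 ≤ q i) ∧ ∑ i, q i = 1) ∧ ∑ i, (q i - p i) ^ 2 / p i ≤ δ}
    ∃ qstar ∈ B, ∃ kstar : Fin n, ℓ ≤ kstar ∧
      (∀ q ∈ B, (∑ i, qstar i * f i) ≤ ∑ i, q i * f i) ∧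
      (∀ i, i ≤ kstar → 0 < qstar i) ∧
      (∀ i, kstar < i → qstar i = 0) :=
  chi2_exists_minimizer_with_downset_support_general n hn f p hf hp0 hp1 δ hδ ℓ hℓ
end

section
/- For |X| = 2, the minimum of E_q(f) over the χ²-ball B_{χ²}(p,δ) equals p(x_1)f(x_1) + p(x_2)f(x_2) - √(δ·p(x_1)·p(x_2))·|f(x_2)-f(x_1)| if δ < p(x_2)/p(x_1), and equals f(x_1) if δ ≥ p(x_2)/p(x_1). -/
/-!
Writing `q = p + t • (1, -1)`, the χ² distance of `q` from `p` is `t² / (p₀ p₁)` and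
`E_q f = E_p f - t (f₁ - f₀)`, so the minimum is attained at the largest admissible `t`, namely
`min (√(δ p₀ p₁)) p₁`: the χ² constraint is binding exactly when `√(δ p₀ p₁) < p₁`, i.e.
`δ < p₁ / p₀`; otherwise the minimiser is the vertex `q = (1, 0)`.
-/

lemma sq_div_add_sq_div_of_add_eq {a b c d : ℝ} (ha : a ≠ 0) (hb : b ≠ 0) (h : c + d = a + b) :
    (c - a) ^ 2 / a + (d - b) ^ 2 / b = (c - a) ^ 2 * (a + b) / (a * b) := by
  have hd : d - b = -(c - a) := by linarith
  rw [hd, neg_sq]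
  field_simp
  ring

lemma sqrt_mul_mul_lt_iff {a b : ℝ} (ha : 0 < a) (hb : 0 < b) (δ : ℝ) :
    Real.sqrt (δ * a * b) < b ↔ δ < b / a := by
  rw [Real.sqrt_lt' hb, lt_div_iff₀ ha, sq, mul_lt_mul_iff_of_pos_right hb]

lemma isGreatest_Icc_inter_sq_le {a b c : ℝ} (ha : 0 ≤ a) (hb : 0 ≤ b) (hc : 0 ≤ c) :
    IsGreatest (Set.Icc (-a) b ∩ {t | t ^ 2 ≤ c}) (min (Real.sqrt c) b) := by
  have hm : 0 ≤ min (Real.sqrt c) b := le_min (Real.sqrt_nonneg c) hb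
  refine ⟨⟨⟨by linarith, min_le_right _ _⟩, ?_⟩, ?_⟩
  · calc min (Real.sqrt c) b ^ 2 ≤ Real.sqrt c ^ 2 := by gcongr; exact min_le_left _ _
      _ = c := Real.sq_sqrt hc
  · rintro t ⟨⟨-, htb⟩, htc⟩
    exact le_min ((le_abs_self t).trans (Real.abs_le_sqrt htc)) htb

lemma binary_chi2Ball_eq_image {p : Fin 2 → ℝ} (hp0 : ∀ i, 0 < p i) (hp1 : p 0 + p 1 = 1)
    (δ : ℝ) :
    {q : Fin 2 → ℝ | ((∀ i, 0 ≤ q i) ∧ q 0 + q 1 = 1) ∧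
        (q 0 - p 0) ^ 2 / p 0 + (q 1 - p 1) ^ 2 / p 1 ≤ δ} =
      (fun t => ![p 0 + t, p 1 - t]) '' (Set.Icc (-p 0) (p 1) ∩ {t | t ^ 2 ≤ δ * p 0 * p 1}) := by
  have hprod : 0 < p 0 * p 1 := mul_pos (hp0 0) (hp0 1)
  have hchi2 : ∀ q : Fin 2 → ℝ, q 0 + q 1 = 1 →
      ((q 0 - p 0) ^ 2 / p 0 + (q 1 - p 1) ^ 2 / p 1 ≤ δ ↔ (q 0 - p 0) ^ 2 ≤ δ * p 0 * p 1) := by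
    intro q hq
    rw [sq_div_add_sq_div_of_add_eq (hp0 0).ne' (hp0 1).ne' (by rw [hq, hp1]), hp1, mul_one,
      div_le_iff₀ hprod, mul_assoc]
  ext q
  constructor
  · rintro ⟨⟨hq, hsum⟩, hchi⟩
    refine ⟨q 0 - p 0, ⟨⟨by linarith [hq 0], by linarith [hq 1]⟩, (hchi2 q hsum).mp hchi⟩, ?_⟩
    funext i
    fin_cases i
    · simp
    · simp; linarith
  · rintro ⟨t, ⟨⟨ht0, ht1⟩, ht⟩, rfl⟩
    have hsum : p 0 + t + (p 1 - t) = 1 := by linarith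
    refine ⟨⟨fun i => ?_, hsum⟩, (hchi2 _ hsum).mpr (by simpa using ht)⟩
    fin_cases i <;> simp <;> linarith

/-- Closed form for the lower expectation over a χ² ball on a binary space. -/
theorem chi2_binary_lower_expectation
    (f p : Fin 2 → ℝ) (hf : f 0 ≤ f 1)
    (hp0 : ∀ i, 0 < p i) (hp1 : p 0 + p 1 = 1)
    (δ : ℝ) (hδ : 0 ≤ δ) :
    let B : Set (Fin 2 → ℝ) :=
      {q | ((∀ i, 0 ≤ q i) ∧ q 0 + q 1 = 1) ∧
        (q 0 - p 0) ^ 2 / p 0 + (q 1 - p 1) ^ 2 / p 1 ≤ δ}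
    IsLeast ((fun q : Fin 2 → ℝ => q 0 * f 0 + q 1 * f 1) '' B)
      (if δ < p 1 / p 0 then
        p 0 * f 0 + p 1 * f 1 - Real.sqrt (δ * p 0 * p 1) * |f 1 - f 0|
      else f 0) := by
  intro B
  have hT := isGreatest_Icc_inter_sq_le (hp0 0).le (hp0 1).le
    (mul_nonneg (mul_nonneg hδ (hp0 0).le) (hp0 1).le)
  have hE : Antitone fun t => (p 0 + t) * f 0 + (p 1 - t) * f 1 := fun s t hst => by nlinarith
  have hsqrt_lt := sqrt_mul_mul_lt_iff (hp0 0) (hp0 1) δ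
  have hm : (if δ < p 1 / p 0 then
      p 0 * f 0 + p 1 * f 1 - Real.sqrt (δ * p 0 * p 1) * |f 1 - f 0| else f 0) =
      (p 0 + min (Real.sqrt (δ * p 0 * p 1)) (p 1)) * f 0 +
        (p 1 - min (Real.sqrt (δ * p 0 * p 1)) (p 1)) * f 1 := by
    rw [abs_of_nonneg (sub_nonneg.mpr hf)]
    split_ifs with h
    · rw [min_eq_left (hsqrt_lt.mpr h).le]
      ring
    · rw [min_eq_right (le_of_not_gt (mt hsqrt_lt.mp h))]
      linear_combination -f 0 * hp1
  rw [show B = _ from binary_chi2Ball_eq_image hp0 hp1 δ, Set.image_image, hm]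
  exact (hE.antitoneOn _).map_isGreatest hT
end
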